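/- arXiv:2408.12785 — 4 statements merged into one kernel-verified Lean document; each statement's English description precedes it below -/
import Mathlib

section
/- Every dynamically central syndetic set A ⊆ ℕ can be partitioned into infinitely many pairwise disjoint dynamically central syndetic sets: there exist sets A₁, A₂, A₃, … ⊆ ℕ, pairwise disjoint, each dynamically central syndetic, with A = ⋃_{i ∈ ℕ} A_i. -/
open Set

/-- `A − n` computed inside the positive integers. -/
def shiftN (A : Set ℕ+) (n : ℕ+) : Set ℕ+ := {m : ℕ+ | m + n ∈ A}

/-- `A − B := ⋃_{b ∈ B} (A − b)`. -/
def shiftSet (A B : Set ℕ+) : Set ℕ+ := ⋃ b ∈ B, shiftN A b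

/-- A set of positive integers is syndetic if `A ∪ (A−1) ∪ ⋯ ∪ (A−N) = ℕ` for some `N`. -/
def Syndetic (A : Set ℕ+) : Prop :=
  ∃ N : ℕ+, (A ∪ ⋃ k ∈ {k : ℕ+ | k ≤ N}, shiftN A k) = Set.univ

/-- A set of positive integers is thick if it contains a translate of every finite set. -/
def Thick (A : Set ℕ+) : Prop :=
  ∀ F : Finset ℕ+, ∃ n : ℕ+, ∀ f ∈ F, f + n ∈ A

/-- Piecewise syndetic: some finite union of translates `A ∪ (A−1) ∪ ⋯ ∪ (A−N)` is thick. -/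
def PiecewiseSyndetic (A : Set ℕ+) : Prop :=
  ∃ N : ℕ+, Thick (A ∪ ⋃ k ∈ {k : ℕ+ | k ≤ N}, shiftN A k)

/-- A self-map of a topological space is minimal if every forward orbit
`{T^n x | n ∈ ℕ, n ≥ 1}` is dense. -/
def MinimalMap {X : Type} [TopologicalSpace X] (T : X → X) : Prop :=
  ∀ x : X, Dense (Set.range fun n : ℕ+ => T^[(n : ℕ)] x)

/-- A minimal topological dynamical system: a nonempty compact metric space together with a
continuous map all of whose forward orbits are dense. -/
structure MinSystem : Type 1 where
  X : Type
  [met : MetricSpace X]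
  [cpt : CompactSpace X]
  [nem : Nonempty X]
  T : X → X
  cont : Continuous T
  minimal : MinimalMap T

attribute [instance] MinSystem.met MinSystem.cpt MinSystem.nem

/-- `R(x,U)`: the set of (positive) return times of `x` to `U`. -/
def retTimes {X : Type} (T : X → X) (x : X) (U : Set X) : Set ℕ+ :=
  {n : ℕ+ | T^[(n : ℕ)] x ∈ U}

/-- Dynamically syndetic sets. -/
def DynSyndetic (A : Set ℕ+) : Prop :=
  ∃ (S : MinSystem) (x : S.X) (U : Set S.X),
    IsOpen U ∧ U.Nonempty ∧ retTimes S.T x U ⊆ A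

/-- Dynamically central syndetic sets. -/
def DynCentralSyndetic (A : Set ℕ+) : Prop :=
  ∃ (S : MinSystem) (x : S.X) (U : Set S.X),
    IsOpen U ∧ x ∈ U ∧ retTimes S.T x U ⊆ A

/-- Dynamically thick sets: `{T^n x | n ∈ A}` is dense for every minimal system and point. -/
def DynThick (A : Set ℕ+) : Prop :=
  ∀ (S : MinSystem) (x : S.X), Dense ((fun n : ℕ+ => S.T^[(n : ℕ)] x) '' A)

/-- Sets of (minimal topological) pointwise recurrence. -/
def PointwiseRecurrent (A : Set ℕ+) : Prop :=
  ∀ (S : MinSystem) (x : S.X) (U : Set S.X), IsOpen U → x ∈ U →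
    ∃ a ∈ A, S.T^[(a : ℕ)] x ∈ U

/-- A family: an upward-closed collection of subsets of the positive integers. -/
def UpwardClosed (F : Set (Set ℕ+)) : Prop :=
  ∀ ⦃A B : Set ℕ+⦄, A ∈ F → A ⊆ B → B ∈ F

/-- A filter (in the combinatorial sense): an upward-closed collection closed under
finite intersections. -/
def IsFilterFamily (F : Set (Set ℕ+)) : Prop :=
  UpwardClosed F ∧ ∀ ⦃A B : Set ℕ+⦄, A ∈ F → B ∈ F → A ∩ B ∈ F

/-- A family all of whose members are syndetic. -/
def SyndeticFamily (F : Set (Set ℕ+)) : Prop := ∀ A ∈ F, Syndetic A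

/-- `A − 𝔉 := {n | A − n ∈ 𝔉}`. -/
def famShift (A : Set ℕ+) (F : Set (Set ℕ+)) : Set ℕ+ := {n : ℕ+ | shiftN A n ∈ F}

/-- `𝔉 + 𝔊 := {A | A − 𝔊 ∈ 𝔉}`. -/
def famSum (F G : Set (Set ℕ+)) : Set (Set ℕ+) := {A : Set ℕ+ | famShift A G ∈ F}

/-- A family is idempotent if `𝔉 ⊆ 𝔉 + 𝔉`. -/
def IdempotentFamily (F : Set (Set ℕ+)) : Prop := F ⊆ famSum F F

/-- A proper family: nonempty and not containing the empty set. -/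
def ProperFamily (F : Set (Set ℕ+)) : Prop := F.Nonempty ∧ ∅ ∉ F


/-- The Cantor space of boolean sequences, as a fresh type carrying only the PiNat metric. -/
def Cant : Type := ℕ → Bool

namespace Cant

noncomputable instance : MetricSpace Cant := @PiNat.metricSpace (fun _ => Bool) _ _

instance : CompactSpace Cant := by
  exact (inferInstance : CompactSpace (ℕ → Bool))

instance : Nonempty Cant := ⟨fun _ => true⟩

/-- evaluation -/
def ev (w : Cant) (n : ℕ) : Bool := (w : ℕ → Bool) n

lemma dist_le_of_agree {a b : Cant} {L : ℕ} (h : ∀ j, j < L → a.ev j = b.ev j) :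
    dist a b ≤ (1/2 : ℝ)^L := by
  have : (a : ℕ → Bool) ∈ PiNat.cylinder (b : ℕ → Bool) L := PiNat.mem_cylinder_iff.2 h
  exact (by exact PiNat.mem_cylinder_iff_dist_le.1 this)

lemma apply_eq_of_dist_lt {a b : Cant} {L : ℕ} (h : dist a b < (1/2 : ℝ)^L) :
    ∀ j, j ≤ L → a.ev j = b.ev j := by
  intro j hj
  exact PiNat.apply_eq_of_dist_lt (x := (a : ℕ → Bool)) (y := (b : ℕ → Bool)) (by exact h) hj

lemma isOpen_ev0 (c : Bool) : IsOpen {w : Cant | w.ev 0 = c} := by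
  rw [Metric.isOpen_iff]
  intro w hw
  refine ⟨1, one_pos, fun v hv => ?_⟩
  have : dist v w < (1/2 : ℝ)^0 := by simpa using (Metric.mem_ball.1 hv)
  have h0 := apply_eq_of_dist_lt this 0 le_rfl
  simpa [h0] using hw

/-- the shift map -/
def shift (w : Cant) : Cant := fun n => (w : ℕ → Bool) (n + 1)

lemma ev_shift (w : Cant) (n : ℕ) : (shift w).ev n = w.ev (n + 1) := rfl

lemma continuous_shift : Continuous shift := by
  rw [Metric.continuous_iff]
  intro b ε hε
  obtain ⟨L, hL⟩ : ∃ L : ℕ, (1/2 : ℝ)^L < ε := exists_pow_lt_of_lt_one hε (by norm_num)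
  refine ⟨(1/2 : ℝ)^(L+1), by positivity, fun a ha => ?_⟩
  have hagree := apply_eq_of_dist_lt ha
  have : ∀ j, j < L → (shift a).ev j = (shift b).ev j := by
    intro j hj
    rw [ev_shift, ev_shift]
    exact hagree (j+1) (by omega)
  calc dist (shift a) (shift b) ≤ (1/2 : ℝ)^L := dist_le_of_agree this
    _ < ε := hL

lemma shift_iterate (w : Cant) (n : ℕ) : ∀ j, (shift^[n] w).ev j = w.ev (j + n) := by
  induction n generalizing w with
  | zero => intro j; simp [ev]
  | succ n ih =>
    intro j
    rw [Function.iterate_succ_apply]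
    rw [ih (shift w) j, ev_shift, Nat.add_assoc]

end Cant

section Machinery

open Function Metric

lemma dynCentralSyndetic_mono {A B : Set ℕ+} (h : DynCentralSyndetic A) (hAB : A ⊆ B) :
    DynCentralSyndetic B := by
  obtain ⟨S, x, U, hU, hxU, hsub⟩ := h
  exact ⟨S, x, U, hU, hxU, hsub.trans hAB⟩

/-- In a minimal system, return times to a nonempty open set have bounded gaps,
uniformly over the starting point. -/
lemma minimal_syndetic_returns {X : Type} [MetricSpace X] [CompactSpace X]
    {T : X → X} (hT : Continuous T) (hmin : MinimalMap T)
    {W : Set X} (hW : IsOpen W) (hne : W.Nonempty) :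
    ∃ N : ℕ, ∀ z : X, ∃ i : ℕ, 1 ≤ i ∧ i ≤ N ∧ T^[i] z ∈ W := by
  have hcov : (Set.univ : Set X) ⊆ ⋃ n : ℕ+, T^[(n : ℕ)] ⁻¹' W := by
    intro z _
    obtain ⟨p, hpr, hpW⟩ := (hmin z).exists_mem_open hW hne
    obtain ⟨n, rfl⟩ := hpr
    exact Set.mem_iUnion.2 ⟨n, hpW⟩
  obtain ⟨t, ht⟩ := isCompact_univ.elim_finite_subcover (fun n : ℕ+ => T^[(n : ℕ)] ⁻¹' W)
    (fun n => hW.preimage (hT.iterate _)) hcov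
  refine ⟨t.sup (fun n : ℕ+ => (n : ℕ)), fun z => ?_⟩
  obtain ⟨n, hn, hz⟩ := Set.mem_iUnion₂.1 (ht (Set.mem_univ z))
  exact ⟨(n : ℕ), n.property, Finset.le_sup (f := fun n : ℕ+ => (n : ℕ)) hn, hz⟩

/-- The orbit closure of a (metrically) uniformly recurrent point is a minimal system. -/
lemma exists_minSystem_of_unifRecurrent {P : Type} [MetricSpace P] [CompactSpace P]
    {S : P → P} (hS : Continuous S) (z₀ : P)
    (hUR : ∀ ε : ℝ, 0 < ε → ∃ N : ℕ, ∀ m : ℕ, ∃ i : ℕ, 1 ≤ i ∧ i ≤ N ∧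
      dist (S^[m + i] z₀) z₀ < ε) :
    ∃ (Sys : MinSystem) (z : Sys.X) (π : Sys.X → P), Continuous π ∧ π z = z₀ ∧
      ∀ (w : Sys.X) (n : ℕ), π (Sys.T^[n] w) = S^[n] (π w) := by
  classical
  set R : Set P := Set.range (fun n : ℕ+ => S^[(n : ℕ)] z₀) with hR
  set Z : Set P := closure R with hZ
  have hz₀Z : z₀ ∈ Z := by
    rw [hZ, Metric.mem_closure_iff]
    intro ε hε
    obtain ⟨N, hN⟩ := hUR ε hε
    obtain ⟨i, hi1, _, hid⟩ := hN 0
    refine ⟨S^[i] z₀, ⟨⟨i, hi1⟩, rfl⟩, ?_⟩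
    rw [dist_comm]
    simpa using hid
  have hmaps : Set.MapsTo S Z Z := by
    intro p hp
    have h1 : S '' R ⊆ R := by
      rintro _ ⟨_, ⟨n, rfl⟩, rfl⟩
      refine ⟨n + 1, ?_⟩
      simp only [PNat.add_coe, PNat.one_coe]
      rw [← Function.iterate_succ_apply' S]
    have h2 : S p ∈ S '' Z := ⟨p, hp, rfl⟩
    have h3 : S '' Z ⊆ closure (S '' R) := image_closure_subset_closure_image hS
    exact closure_mono h1 (h3 h2)
  have approx : ∀ w ∈ Z, ∀ ε : ℝ, 0 < ε → ∃ n : ℕ, 1 ≤ n ∧ dist (S^[n] w) z₀ ≤ ε := by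
    intro w hw ε hε
    obtain ⟨N, hN⟩ := hUR ε hε
    have hFclosed : IsClosed (⋃ i ∈ Finset.Icc 1 N, S^[i] ⁻¹' Metric.closedBall z₀ ε) := by
      apply Set.Finite.isClosed_biUnion (Finset.Icc 1 N).finite_toSet
      intro i _
      exact Metric.isClosed_closedBall.preimage (hS.iterate i)
    have hsub : R ⊆ ⋃ i ∈ Finset.Icc 1 N, S^[i] ⁻¹' Metric.closedBall z₀ ε := by
      rintro _ ⟨n, rfl⟩
      obtain ⟨i, hi1, hiN, hid⟩ := hN (n : ℕ)
      refine Set.mem_biUnion (by exact Finset.mem_Icc.2 ⟨hi1, hiN⟩) ?_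
      have hit : S^[i] (S^[(n : ℕ)] z₀) = S^[(n : ℕ) + i] z₀ := by
        rw [add_comm, Function.iterate_add_apply]
      simp only [Set.mem_preimage, hit, Metric.mem_closedBall]
      exact le_of_lt hid
    have hZF := closure_minimal hsub hFclosed
    obtain ⟨i, hi, hmem⟩ := Set.mem_iUnion₂.1 (hZF hw)
    exact ⟨i, (Finset.mem_Icc.1 hi).1, Metric.mem_closedBall.1 hmem⟩
  have dense_orb : ∀ w ∈ Z, ∀ v ∈ Z, ∀ ε : ℝ, 0 < ε →
      ∃ n : ℕ, 1 ≤ n ∧ dist (S^[n] w) v < ε := by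
    intro w hw v hv ε hε
    obtain ⟨q, hqR, hq⟩ := Metric.mem_closure_iff.1 hv (ε/2) (by positivity)
    obtain ⟨m, rfl⟩ := hqR
    have hcont : Continuous (S^[(m : ℕ)]) := hS.iterate _
    obtain ⟨δ, hδpos, hδ⟩ := Metric.continuousAt_iff.1 hcont.continuousAt (ε/2) (by positivity)
    obtain ⟨n, hn1, hnd⟩ := approx w hw (δ/2) (by positivity)
    refine ⟨(m : ℕ) + n, by omega, ?_⟩
    have heq : S^[(m : ℕ) + n] w = S^[(m : ℕ)] (S^[n] w) := Function.iterate_add_apply S _ _ _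
    rw [heq]
    have h1 : dist (S^[(m : ℕ)] (S^[n] w)) (S^[(m : ℕ)] z₀) < ε/2 :=
      hδ (lt_of_le_of_lt hnd (by linarith))
    have h2 : dist (S^[(m : ℕ)] z₀) v < ε/2 := by rw [dist_comm]; exact hq
    calc dist (S^[(m : ℕ)] (S^[n] w)) v
        ≤ dist (S^[(m : ℕ)] (S^[n] w)) (S^[(m : ℕ)] z₀) + dist (S^[(m : ℕ)] z₀) v :=
          dist_triangle _ _ _
      _ < ε := by linarith
  haveI : CompactSpace Z := isCompact_iff_compactSpace.1 (isClosed_closure.isCompact)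
  haveI : Nonempty Z := ⟨⟨z₀, hz₀Z⟩⟩
  let Tres : Z → Z := fun p => ⟨S p.1, hmaps p.2⟩
  have hTresCont : Continuous Tres := (hS.comp continuous_subtype_val).subtype_mk _
  have hIter : ∀ (w : Z) (n : ℕ), ((Tres^[n] w : Z) : P) = S^[n] (w : P) := by
    intro w n
    induction n generalizing w with
    | zero => rfl
    | succ n ih =>
      rw [Function.iterate_succ_apply, Function.iterate_succ_apply]
      exact ih (Tres w)
  have hminZ : MinimalMap Tres := by
    intro w
    rw [Metric.dense_iff]
    intro v r hr
    obtain ⟨n, hn1, hnd⟩ := dense_orb w.1 w.2 v.1 v.2 r hr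
    refine ⟨Tres^[n] w, Metric.mem_ball.2 ?_, ⟨⟨n, hn1⟩, rfl⟩⟩
    rw [Subtype.dist_eq, hIter]
    exact hnd
  refine ⟨{ X := Z, T := Tres, cont := hTresCont, minimal := hminZ }, ⟨z₀, hz₀Z⟩,
    Subtype.val, continuous_subtype_val, rfl, hIter⟩

end Machinery

section Coding

open Function Metric

/-- The coding construction: if `C` contains `x`, is "thick" at `x` (i.e. `x` is in the closure
of its interior), and the forward orbit of `x` avoids the frontier of `C`, then the visit times
of `x` to `C` form a dynamically central syndetic set. -/
lemma coding_central {X : Type} [MetricSpace X] [CompactSpace X]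
    {T : X → X} (hT : Continuous T) (hmin : MinimalMap T) (x : X) (C : Set X)
    (hxC : x ∈ C) (hacc : x ∈ closure (interior C))
    (hfr : ∀ j : ℕ, 1 ≤ j → T^[j] x ∉ frontier C) :
    DynCentralSyndetic {n : ℕ+ | T^[(n : ℕ)] x ∈ C} := by
  classical
  -- the coding sequence
  let y : Cant := fun n => decide (T^[n] x ∈ C)
  have hy : ∀ n : ℕ, y.ev n = true ↔ T^[n] x ∈ C := by
    intro n
    simp [Cant.ev, y]
  -- the product system
  let S : X × Cant → X × Cant := fun p => (T p.1, Cant.shift p.2)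
  have hScont : Continuous S :=
    (hT.comp continuous_fst).prodMk (Cant.continuous_shift.comp continuous_snd)
  have hSiter : ∀ (n : ℕ) (p : X × Cant), S^[n] p = (T^[n] p.1, Cant.shift^[n] p.2) := by
    intro n
    induction n with
    | zero => intro p; rfl
    | succ n ih =>
      intro p
      rw [Function.iterate_succ_apply, ih, Function.iterate_succ_apply,
        Function.iterate_succ_apply]
  -- good open sets along the orbit
  let G : ℕ → Set X := fun j => if T^[j] x ∈ C then interior C else (closure C)ᶜ
  have hGopen : ∀ j, IsOpen (G j) := by
    intro j
    by_cases h : T^[j] x ∈ C <;> simp only [G, h, if_true, if_false] <;>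
      first | exact isOpen_interior | exact isClosed_closure.isOpen_compl
  have hGmem : ∀ j, 1 ≤ j → T^[j] x ∈ G j := by
    intro j hj
    have hf := hfr j hj
    rw [frontier, Set.mem_diff] at hf
    push_neg at hf
    by_cases h : T^[j] x ∈ C
    · simp only [G, h, if_true]
      exact hf (subset_closure h)
    · simp only [G, h, if_false]
      intro hc
      exact h (interior_subset (hf hc))
  have hGC : ∀ j, ∀ z ∈ G j, (z ∈ C ↔ T^[j] x ∈ C) := by
    intro j z hz
    by_cases h : T^[j] x ∈ C <;> simp only [G, h, if_true, if_false] at hz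
    · simp [h, interior_subset hz]
    · simp [h]
      intro hzC
      exact hz (subset_closure hzC)
  -- uniform recurrence of the coded point
  have hUR : ∀ ε : ℝ, 0 < ε → ∃ N : ℕ, ∀ m : ℕ, ∃ i : ℕ, 1 ≤ i ∧ i ≤ N ∧
      dist (S^[m + i] (x, y)) (x, y) < ε := by
    intro ε hε
    obtain ⟨L, hL⟩ : ∃ L : ℕ, (1/2 : ℝ)^L < ε := exists_pow_lt_of_lt_one hε (by norm_num)
    set V : Set X := Metric.ball x ε ∩ ⋂ j ∈ Finset.Ico 1 L, T^[j] ⁻¹' (G j) with hV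
    have hVopen : IsOpen V :=
      Metric.isOpen_ball.inter (isOpen_biInter_finset fun j _ => (hGopen j).preimage (hT.iterate j))
    have hxV : x ∈ V := by
      refine ⟨Metric.mem_ball_self hε, ?_⟩
      rw [Set.mem_iInter₂]
      intro j hj
      exact hGmem j (Finset.mem_Ico.1 hj).1
    have hWne : (interior C ∩ V).Nonempty := by
      obtain ⟨z, hz⟩ := (_root_.mem_closure_iff.1 hacc) V hVopen hxV
      exact ⟨z, hz.2, hz.1⟩
    obtain ⟨N, hN⟩ := minimal_syndetic_returns hT hmin (isOpen_interior.inter hVopen) hWne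
    refine ⟨N, fun m => ?_⟩
    obtain ⟨i, hi1, hiN, hzi⟩ := hN (T^[m] x)
    rw [← Function.iterate_add_apply] at hzi
    rw [add_comm i m] at hzi
    refine ⟨i, hi1, hiN, ?_⟩
    rw [hSiter, Prod.dist_eq]
    apply max_lt
    · exact Metric.mem_ball.1 hzi.2.1
    · have hagree : ∀ j, j < L → (Cant.shift^[m+i] y).ev j = y.ev j := by
        intro j hjL
        rw [Cant.shift_iterate]
        rcases Nat.eq_zero_or_pos j with rfl | hj
        · have hmem : T^[0 + (m+i)] x ∈ C := by
            rw [Nat.zero_add]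
            exact interior_subset hzi.1
          rw [((hy _).2 hmem)]
          exact ((hy 0).2 (by simpa using hxC)).symm
        · have hVmem := hzi.2.2
          rw [Set.mem_iInter₂] at hVmem
          have hGmem2 : T^[j + (m+i)] x ∈ G j := by
            rw [Function.iterate_add_apply]
            exact hVmem j (Finset.mem_Ico.2 ⟨hj, hjL⟩)
          have hiff := hGC j _ hGmem2
          by_cases hc : T^[j] x ∈ C
          · rw [(hy _).2 (hiff.2 hc), (hy _).2 hc]
          · have h1 : ¬ (T^[j + (m+i)] x ∈ C) := fun hmem => hc (hiff.1 hmem)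
            have e1 : y.ev (j + (m+i)) = false := by
              rw [← Bool.not_eq_true, hy]; exact h1
            have e2 : y.ev j = false := by
              rw [← Bool.not_eq_true, hy]; exact hc
            rw [e1, e2]
      calc dist (Cant.shift^[m+i] y) y ≤ (1/2 : ℝ)^L := Cant.dist_le_of_agree hagree
        _ < ε := hL
  -- build the minimal system
  obtain ⟨Sys, z, π, hπc, hπz, hπiter⟩ := exists_minSystem_of_unifRecurrent hScont (x, y) hUR
  refine ⟨Sys, z, π ⁻¹' ((fun p : X × Cant => p.2) ⁻¹' {w : Cant | w.ev 0 = true}), ?_, ?_, ?_⟩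
  · exact (hπc.comp (continuous_id)).isOpen_preimage _
      (((Cant.isOpen_ev0 true).preimage continuous_snd))
  · show (π z).2 ∈ {w : Cant | w.ev 0 = true}
    rw [hπz]
    exact (hy 0).2 (by simpa using hxC)
  · intro n hn
    have hp := hπiter z (n : ℕ)
    rw [hπz] at hp
    have h2 : (S^[(n : ℕ)] (x, y)).2.ev 0 = true := by
      rw [← hp]; exact hn
    rw [hSiter] at h2
    have h3 : y.ev (0 + (n : ℕ)) = true := by
      rw [← Cant.shift_iterate]; exact h2
    rw [Nat.zero_add, hy] at h3
    exact h3

end Coding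

section Annuli

open Function Metric

/-- Around a non-isolated point of a minimal system one can find infinitely many pairwise
disjoint dynamically central syndetic subsets of the return-time set. -/
lemma disjoint_central_family {X : Type} [MetricSpace X] [CompactSpace X]
    {T : X → X} (hT : Continuous T) (hmin : MinimalMap T) (x : X) {U : Set X}
    (hU : IsOpen U) (hxU : x ∈ U)
    (hni : ∀ ε : ℝ, 0 < ε → ∃ p : X, p ≠ x ∧ dist p x < ε) :
    ∃ Q : ℕ → Set ℕ+, (∀ i, DynCentralSyndetic (Q i)) ∧
      (∀ i j, i ≠ j → Disjoint (Q i) (Q j)) ∧ ∀ i, Q i ⊆ retTimes T x U := by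
  classical
  -- x is not periodic
  have hnp : ∀ j : ℕ, 1 ≤ j → T^[j] x ≠ x := by
    intro j hj hfix
    have hsub : Set.range (fun n : ℕ+ => T^[(n : ℕ)] x) ⊆ (fun i : ℕ => T^[i] x) '' Set.Iic j := by
      rintro _ ⟨n, rfl⟩
      refine ⟨(n : ℕ) % j, Set.mem_Iic.2 (le_of_lt (Nat.mod_lt _ (by omega))), ?_⟩
      show T^[(n : ℕ) % j] x = T^[(n : ℕ)] x
      conv_rhs => rw [← Nat.mod_add_div (n : ℕ) j]
      rw [Function.iterate_add_apply]
      congr 1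
      rw [Function.iterate_mul]
      exact (Function.iterate_fixed hfix _).symm
    have hfin : ((fun i : ℕ => T^[i] x) '' Set.Iic j).Finite :=
      (Set.finite_Iic j).image _
    have huniv : (Set.univ : Set X) ⊆ (fun i : ℕ => T^[i] x) '' Set.Iic j := by
      have := (hmin x).closure_eq
      calc (Set.univ : Set X) = closure (Set.range fun n : ℕ+ => T^[(n : ℕ)] x) := this.symm
        _ ⊆ closure ((fun i : ℕ => T^[i] x) '' Set.Iic j) := closure_mono hsub
        _ = _ := hfin.isClosed.closure_eq
    have hXfin : (Set.univ : Set X).Finite := hfin.subset huniv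
    have hDfin : ({p : X | p ≠ x}).Finite := hXfin.subset (Set.subset_univ _)
    rcases Set.eq_empty_or_nonempty {p : X | p ≠ x} with hemp | hne
    · obtain ⟨p, hp, _⟩ := hni 1 one_pos
      have hmem : p ∈ {p : X | p ≠ x} := hp
      rw [hemp] at hmem
      exact Set.notMem_empty p hmem
    · obtain ⟨a, ha, hamin⟩ := Set.exists_min_image _ (fun p => dist p x) hDfin hne
      have hapos : 0 < dist a x := dist_pos.2 ha
      obtain ⟨p, hp, hpd⟩ := hni (dist a x) hapos
      exact absurd hpd (not_lt.2 (hamin p hp))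
  -- radius of a ball inside U
  obtain ⟨r₀, hr₀pos, hr₀⟩ := Metric.isOpen_iff.1 hU x hxU
  -- the countable set of orbit distances
  set D : Set ℝ := Set.range (fun j : ℕ => dist (T^[j+1] x) x) with hD
  have hDcount : D.Countable := Set.countable_range _
  -- the basic step
  have step : ∀ r : ℝ, 0 < r → ∃ r' : ℝ, ∃ q : X,
      0 < r' ∧ 2 * r' < r ∧ r' ∉ D ∧ r' < dist q x ∧ dist q x < r := by
    intro r hr
    obtain ⟨q, hqne, hqd⟩ := hni (r/2) (by linarith)
    have hdq : 0 < dist q x := dist_pos.2 hqne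
    have hns : ¬ (Set.Ioo (dist q x / 2) (dist q x) ⊆ D) := by
      intro hsub
      have h1 : (Set.Ioo (dist q x / 2) (dist q x)).Countable := hDcount.mono hsub
      have h2 := h1.measure_zero MeasureTheory.volume
      rw [Real.volume_Ioo, ENNReal.ofReal_eq_zero] at h2
      linarith
    obtain ⟨r', hr'mem, hr'D⟩ := Set.not_subset.1 hns
    obtain ⟨h1, h2⟩ := hr'mem
    exact ⟨r', q, by linarith, by linarith, hr'D, h2, by linarith⟩
  choose f g hf1 hf2 hf3 hf4 hf5 using step
  -- the sequence of radii
  let s : ℕ → {r : ℝ // 0 < r} := fun n =>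
    Nat.rec ⟨f r₀ hr₀pos, hf1 _ _⟩ (fun _ p => ⟨f p.1 p.2, hf1 _ _⟩) n
  have hs_succ : ∀ n, (s (n+1)).1 = f (s n).1 (s n).2 := fun n => rfl
  have hs_half : ∀ n, 2 * (s (n+1)).1 < (s n).1 := by
    intro n; rw [hs_succ]; exact hf2 _ _
  have hs_D : ∀ n, (s n).1 ∉ D := by
    intro n
    cases n with
    | zero => exact hf3 _ _
    | succ n => rw [hs_succ]; exact hf3 _ _
  have hs_lt : ∀ n, (s (n+1)).1 < (s n).1 := by
    intro n
    have := hs_half n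
    have := (s (n+1)).2
    linarith
  have hs_anti : StrictAnti (fun n => (s n).1) := strictAnti_nat_of_succ_lt hs_lt
  have hs0_lt : (s 0).1 < r₀ := by
    have := hf2 r₀ hr₀pos
    have := (s 0).2
    show (s 0).1 < r₀
    have h0 : (s 0).1 = f r₀ hr₀pos := rfl
    rw [h0]; linarith
  have hs_le : ∀ {m n : ℕ}, m ≤ n → (s n).1 ≤ (s m).1 := fun h => hs_anti.antitone h
  have hs_pow : ∀ n, (s n).1 ≤ (s 0).1 * (1/2)^n := by
    intro n
    induction n with
    | zero => simp
    | succ n ih =>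
      have h1 := hs_half n
      have h2 : (s (n+1)).1 < (s n).1 / 2 := by linarith
      calc (s (n+1)).1 ≤ (s n).1 / 2 := h2.le
        _ ≤ ((s 0).1 * (1/2)^n) / 2 := by linarith
        _ = (s 0).1 * (1/2)^(n+1) := by ring
  have hs_decay : ∀ ε : ℝ, 0 < ε → ∃ M : ℕ, ∀ n, M ≤ n → (s n).1 < ε := by
    intro ε hε
    obtain ⟨M, hM⟩ : ∃ M : ℕ, (1/2 : ℝ)^M < ε / (s 0).1 :=
      exists_pow_lt_of_lt_one (div_pos hε (s 0).2) (by norm_num)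
    refine ⟨M, fun n hn => ?_⟩
    have h1 : (s n).1 ≤ (s M).1 := hs_le hn
    have h2 : (s M).1 ≤ (s 0).1 * (1/2)^M := hs_pow M
    have h3 : (s 0).1 * (1/2)^M < ε := by
      have := (s 0).2
      calc (s 0).1 * (1/2)^M < (s 0).1 * (ε / (s 0).1) := by
            apply mul_lt_mul_of_pos_left hM this
        _ = ε := by field_simp
    linarith
  -- the annuli and the witnessing points in them
  let q : ℕ → X := fun n => g (s n).1 (s n).2
  let Ann : ℕ → Set X := fun n => {p : X | (s (n+1)).1 < dist p x ∧ dist p x < (s n).1}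
  have hAnnOpen : ∀ n, IsOpen (Ann n) := by
    intro n
    have hc : Continuous (fun p : X => dist p x) := continuous_id.dist continuous_const
    have : Ann n = (fun p : X => dist p x) ⁻¹' (Set.Ioo (s (n+1)).1 (s n).1) := rfl
    rw [this]
    exact isOpen_Ioo.preimage hc
  have hqAnn : ∀ n, q n ∈ Ann n := by
    intro n
    constructor
    · rw [hs_succ]; exact hf4 _ _
    · exact hf5 _ _
  have hAnnDisj : ∀ m n, m ≠ n → Ann m ∩ Ann n = ∅ := by
    intro m n hmn
    rcases lt_or_gt_of_ne hmn with h | h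
    · apply Set.eq_empty_iff_forall_notMem.2
      rintro z ⟨⟨hz1, hz2⟩, ⟨hz3, hz4⟩⟩
      have : (s n).1 ≤ (s (m+1)).1 := hs_le h
      linarith
    · apply Set.eq_empty_iff_forall_notMem.2
      rintro z ⟨⟨hz1, hz2⟩, ⟨hz3, hz4⟩⟩
      have : (s m).1 ≤ (s (n+1)).1 := hs_le h
      linarith
  -- the sets C i
  let C : ℕ → Set X := fun i => {x} ∪ ⋃ (n : ℕ) (_ : (Nat.unpair n).1 = i), Ann n
  have hAnnC : ∀ i n, (Nat.unpair n).1 = i → Ann n ⊆ C i := by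
    intro i n hn z hz
    exact Set.mem_union_right _ (Set.mem_iUnion₂.2 ⟨n, hn, hz⟩)
  have hCU : ∀ i, C i ⊆ U := by
    rintro i z (rfl | hz)
    · exact hxU
    · obtain ⟨n, hn, hz1, hz2⟩ := Set.mem_iUnion₂.1 hz
      apply hr₀
      have : (s n).1 ≤ (s 0).1 := by
        rcases Nat.eq_zero_or_pos n with rfl | h
        · exact le_refl _
        · exact (hs_le (Nat.zero_le n))
      exact Metric.mem_ball.2 (by linarith [hs0_lt])
  have hCclosedBall : ∀ i, C i ⊆ Metric.closedBall x (s 0).1 := by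
    rintro i z (rfl | hz)
    · exact Metric.mem_closedBall_self (s 0).2.le
    · obtain ⟨n, hn, hz1, hz2⟩ := Set.mem_iUnion₂.1 hz
      have : (s n).1 ≤ (s 0).1 := hs_le (Nat.zero_le n)
      exact Metric.mem_closedBall.2 (by linarith)
  -- hypotheses of the coding lemma
  have hxC : ∀ i, x ∈ C i := fun i => Set.mem_union_left _ rfl
  have hacc : ∀ i, x ∈ closure (interior (C i)) := by
    intro i
    rw [Metric.mem_closure_iff]
    intro ε hε
    obtain ⟨M, hM⟩ := hs_decay ε hε
    set n := Nat.pair i M with hn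
    have hnM : M ≤ n := Nat.right_le_pair i M
    have hsn : (s n).1 < ε := hM n hnM
    refine ⟨q n, ?_, ?_⟩
    · have hsubint : Ann n ⊆ interior (C i) :=
        interior_maximal (hAnnC i n (by rw [hn, Nat.unpair_pair])) (hAnnOpen n)
      exact hsubint (hqAnn n)
    · rw [dist_comm]
      have := (hqAnn n).2
      linarith
  have hfr : ∀ i, ∀ j : ℕ, 1 ≤ j → T^[j] x ∉ frontier (C i) := by
    intro i j hj
    set p := T^[j] x with hp
    have hdp_pos : 0 < dist p x := dist_pos.2 (hnp j hj)
    have hdpD : dist p x ∈ D := by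
      refine ⟨j - 1, ?_⟩
      show dist (T^[(j-1)+1] x) x = dist p x
      rw [show j - 1 + 1 = j from by omega]
    have hdp_ne : ∀ n, dist p x ≠ (s n).1 := by
      intro n he
      exact hs_D n (he ▸ hdpD)
    rcases lt_trichotomy (dist p x) (s 0).1 with hlt | heq | hgt
    · -- p lies in some annulus
      have hex : ∃ m, (s m).1 < dist p x := by
        obtain ⟨M, hM⟩ := hs_decay (dist p x) hdp_pos
        exact ⟨M, hM M (le_refl M)⟩
      have hn₀pos : Nat.find hex ≠ 0 := by
        intro h0
        have hsp := Nat.find_spec hex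
        rw [h0] at hsp
        linarith
      obtain ⟨n, hn⟩ := Nat.exists_eq_succ_of_ne_zero hn₀pos
      have hspec : (s (n+1)).1 < dist p x := by
        have hsp := Nat.find_spec hex
        rwa [hn] at hsp
      have hminn : ¬ (s n).1 < dist p x :=
        Nat.find_min hex (by rw [hn]; exact Nat.lt_succ_self n)
      have hnlt : dist p x < (s n).1 := lt_of_le_of_ne (not_lt.1 hminn) (hdp_ne n)
      have hpAnn : p ∈ Ann n := ⟨hspec, hnlt⟩
      by_cases hni' : (Nat.unpair n).1 = i
      · have : p ∈ interior (C i) :=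
          interior_maximal (hAnnC i n hni') (hAnnOpen n) hpAnn
        rw [frontier]
        exact fun hf => hf.2 this
      · have hdisj : Ann n ∩ C i = ∅ := by
          apply Set.eq_empty_iff_forall_notMem.2
          rintro z ⟨hzA, (rfl | hzC)⟩
          · have h1 := hzA.1
            rw [dist_self] at h1
            exact absurd h1 (not_lt.2 (s (n+1)).2.le)
          · obtain ⟨m, hm, hzm⟩ := Set.mem_iUnion₂.1 hzC
            have hmn : m ≠ n := fun he => hni' (he ▸ hm)
            have hd := hAnnDisj m n hmn
            have : z ∈ Ann m ∩ Ann n := ⟨hzm, hzA⟩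
            rw [hd] at this
            exact Set.notMem_empty z this
        intro hpf
        have hpc : p ∈ closure (C i) := frontier_subset_closure hpf
        obtain ⟨z, hz⟩ := (_root_.mem_closure_iff.1 hpc) (Ann n) (hAnnOpen n) hpAnn
        have : z ∈ Ann n ∩ C i := ⟨hz.1, hz.2⟩
        rw [hdisj] at this
        exact Set.notMem_empty z this
    · exact absurd heq (hdp_ne 0)
    · intro hpf
      have hpc : p ∈ closure (C i) := frontier_subset_closure hpf
      have : closure (C i) ⊆ Metric.closedBall x (s 0).1 :=
        closure_minimal (hCclosedBall i) Metric.isClosed_closedBall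
      have := Metric.mem_closedBall.1 (this hpc)
      linarith
  -- conclusion
  refine ⟨fun i => {n : ℕ+ | T^[(n : ℕ)] x ∈ C i}, ?_, ?_, ?_⟩
  · intro i
    exact coding_central hT hmin x (C i) (hxC i) (hacc i)
      (fun j hj => hfr i j hj)
  · intro i j hij
    rw [Set.disjoint_left]
    intro n hni' hnj
    have h1 : T^[(n : ℕ)] x ∈ C i := hni'
    have h2 : T^[(n : ℕ)] x ∈ C j := hnj
    have hnper := hnp (n : ℕ) n.property
    rcases h1 with h1x | h1
    · exact hnper (Set.mem_singleton_iff.1 h1x)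
    · rcases h2 with h2x | h2
      · exact hnper (Set.mem_singleton_iff.1 h2x)
      · obtain ⟨m, hm, hzm⟩ := Set.mem_iUnion₂.1 h1
        obtain ⟨m', hm', hzm'⟩ := Set.mem_iUnion₂.1 h2
        have hmm : m = m' := by
          by_contra hne
          have hd := hAnnDisj m m' hne
          have hmem : T^[(n : ℕ)] x ∈ Ann m ∩ Ann m' := ⟨hzm, hzm'⟩
          rw [hd] at hmem
          exact Set.notMem_empty _ hmem
        exact hij (by rw [← hm, hmm, hm'])
  · intro i n hn
    exact hCU i hn

end Annuli

section Arithmetic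

open Function Metric

/-- Uniqueness of the exponent in the `2^c * odd` decomposition. -/
lemma pow2_odd_unique : ∀ {c t c' t' : ℕ}, 2^c * (2*t+1) = 2^c' * (2*t'+1) → c = c' := by
  have key : ∀ c t c' t' : ℕ, c < c' → 2^c * (2*t+1) = 2^c' * (2*t'+1) → False := by
    intro c t c' t' hlt h
    have hd : 2^c' = 2^c * 2^(c'-c) := by
      rw [← pow_add]
      congr 1
      omega
    rw [hd, mul_assoc] at h
    have hc : (2*t+1) = 2^(c'-c) * (2*t'+1) :=
      Nat.eq_of_mul_eq_mul_left (pow_pos (by norm_num) c) h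
    have h2 : 2^(c'-c) = 2 * 2^(c'-c-1) := by
      rw [← pow_succ']
      congr 1
      omega
    rw [h2, mul_assoc] at hc
    omega
  intro c t c' t' h
  rcases lt_trichotomy c c' with hlt | heq | hgt
  · exact absurd h (fun hh => key c t c' t' hlt hh)
  · exact heq
  · exact absurd h.symm (fun hh => key c' t' c t hgt hh)

/-- Existence of the `2^c * odd` decomposition. -/
lemma pow2_odd_exists : ∀ m : ℕ, 0 < m → ∃ c t : ℕ, m = 2^c * (2*t+1) := by
  intro m hm
  obtain ⟨c, m', hnd, heq⟩ := Nat.exists_eq_pow_mul_and_not_dvd (show m ≠ 0 by omega) 2 (by norm_num)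
  refine ⟨c, m'/2, ?_⟩
  have hodd : m' % 2 = 1 := Nat.two_dvd_ne_zero.1 hnd
  have : m' = 2 * (m'/2) + 1 := by omega
  rw [heq, ← this]

/-- Infinitely many pairwise disjoint dynamically central syndetic subsets of `kℕ⁺`. -/
lemma disjoint_central_family_periodic (k : ℕ) (hk : 1 ≤ k) :
    ∃ Q : ℕ → Set ℕ+, (∀ i, DynCentralSyndetic (Q i)) ∧
      (∀ i j, i ≠ j → Disjoint (Q i) (Q j)) ∧ ∀ i, Q i ⊆ {n : ℕ+ | k ∣ (n : ℕ)} := by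
  classical
  set Q : ℕ → Set ℕ+ := fun i =>
    {n : ℕ+ | ∃ a s : ℕ, (n : ℕ) = k * (2^a * (2*s+1)) ∧ (Nat.unpair a).1 = i} with hQ
  have hQsub : ∀ i, Q i ⊆ {n : ℕ+ | k ∣ (n : ℕ)} := by
    rintro i n ⟨a, s, hn, _⟩
    exact ⟨2^a * (2*s+1), hn⟩
  have hQdisj : ∀ i j, i ≠ j → Disjoint (Q i) (Q j) := by
    intro i j hij
    rw [Set.disjoint_left]
    rintro n ⟨a, s, hn, ha⟩ ⟨a', s', hn', ha'⟩
    have he : 2^a * (2*s+1) = 2^a' * (2*s'+1) :=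
      Nat.eq_of_mul_eq_mul_left (by omega) (hn ▸ hn')
    have : a = a' := pow2_odd_unique he
    exact hij (by rw [← ha, this, ha'])
  refine ⟨Q, ?_, hQdisj, hQsub⟩
  intro i
  -- the coding point
  let u : Cant := fun n =>
    decide (n = 0 ∨ ∃ a s : ℕ, n = k * (2^a * (2*s+1)) ∧ (Nat.unpair a).1 = i)
  have hu : ∀ n : ℕ, u.ev n = true ↔
      (n = 0 ∨ ∃ a s : ℕ, n = k * (2^a * (2*s+1)) ∧ (Nat.unpair a).1 = i) := by
    intro n
    simp [Cant.ev, u]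
  -- uniform recurrence
  have hUR : ∀ ε : ℝ, 0 < ε → ∃ N : ℕ, ∀ m : ℕ, ∃ istep : ℕ, 1 ≤ istep ∧ istep ≤ N ∧
      dist (Cant.shift^[m + istep] u) u < ε := by
    intro ε hε
    obtain ⟨L, hL⟩ : ∃ L : ℕ, (1/2 : ℝ)^L < ε := exists_pow_lt_of_lt_one hε (by norm_num)
    set a := Nat.pair i L with haa
    have haL : L ≤ a := Nat.right_le_pair i L
    have hai : (Nat.unpair a).1 = i := by rw [haa, Nat.unpair_pair]
    set P := k * 2^(a+1) with hP
    have hPpos : 0 < P := by positivity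
    refine ⟨k * 2^a + P, fun m => ?_⟩
    set n := k * 2^a + P * (m / P + 1) with hn
    have h1 : m % P < P := Nat.mod_lt _ hPpos
    have h2 : P * (m / P) + m % P = m := Nat.div_add_mod m P
    have h3 : P * (m / P + 1) = P * (m / P) + P := by ring
    have hnm : m < n := by omega
    have hstep : n - m ≤ k * 2^a + P := by omega
    -- decomposition of n
    have hndec : n = k * (2^a * (2*(m / P + 1)+1)) := by
      rw [hn, hP, pow_succ]
      ring
    have hkn : k ∣ n := ⟨2^a * (2*(m / P + 1)+1), hndec⟩
    -- agreement of u with its shift by n on the window [0, L)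
    have hagree : ∀ j, j < L → u.ev (j + n) = u.ev j := by
      intro j hjL
      rcases Nat.eq_zero_or_pos j with rfl | hj
      · rw [Nat.zero_add]
        have h1 : u.ev n = true := (hu n).2 (Or.inr ⟨a, m / P + 1, hndec, hai⟩)
        have h2 : u.ev 0 = true := (hu 0).2 (Or.inl rfl)
        rw [h1, h2]
      · by_cases hkj : k ∣ j
        · -- j = k * m₁ with m₁ = 2^c * (2t+1), c < a
          obtain ⟨m₁, hm₁⟩ := hkj
          have hm₁pos : 0 < m₁ := by
            rcases Nat.eq_zero_or_pos m₁ with rfl | h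
            · omega
            · exact h
          obtain ⟨c, t, hct⟩ := pow2_odd_exists m₁ hm₁pos
          have hca : c < a := by
            have h1 : c < 2^c := Nat.lt_two_pow_self (n := c)
            have h2 : 2^c ≤ m₁ := by
              rw [hct]; exact Nat.le_mul_of_pos_right _ (by omega)
            have h3 : m₁ ≤ j := by
              rw [hm₁]; exact Nat.le_mul_of_pos_left _ (by omega)
            omega
          -- value of u at j
          have hj_iff : u.ev j = true ↔ (Nat.unpair c).1 = i := by
            rw [hu]
            constructor
            · rintro (h0 | ⟨a', s', hj', ha'⟩)
              · omega
              · have he : 2^a' * (2*s'+1) = 2^c * (2*t+1) := by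
                  apply Nat.eq_of_mul_eq_mul_left (show 0 < k by omega)
                  rw [← hj', hm₁, hct]
                rw [← ha', pow2_odd_unique he]
            · intro hc
              exact Or.inr ⟨c, t, by rw [hm₁, hct], hc⟩
          -- value of u at j + n
          have hdecjn : j + n = k * (2^c * (2*(t + 2^(a-c-1)*(2*(m / P + 1)+1))+1)) := by
            rw [hm₁, hct, hndec]
            have h2 : 2^a = 2^c * (2 * 2^(a-c-1)) := by
              rw [← pow_succ']
              rw [← pow_add]
              congr 1
              omega
            rw [h2]
            ring
          have hjn_iff : u.ev (j + n) = true ↔ (Nat.unpair c).1 = i := by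
            rw [hu]
            constructor
            · rintro (h0 | ⟨a', s', hj', ha'⟩)
              · omega
              · have he : 2^a' * (2*s'+1) = 2^c * (2*(t + 2^(a-c-1)*(2*(m / P + 1)+1))+1) := by
                  apply Nat.eq_of_mul_eq_mul_left (show 0 < k by omega)
                  rw [← hj', hdecjn]
                rw [← ha', pow2_odd_unique he]
            · intro hc
              exact Or.inr ⟨c, _, hdecjn, hc⟩
          by_cases hc : (Nat.unpair c).1 = i
          · rw [hj_iff.2 hc, hjn_iff.2 hc]
          · have e1 : u.ev (j + n) = false := by
              rw [← Bool.not_eq_true]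
              intro h
              exact hc (hjn_iff.1 h)
            have e2 : u.ev j = false := by
              rw [← Bool.not_eq_true]
              intro h
              exact hc (hj_iff.1 h)
            rw [e1, e2]
        · -- k does not divide j
          have e1 : u.ev (j + n) = false := by
            rw [← Bool.not_eq_true, hu]
            rintro (h0 | ⟨a', s', hj', _⟩)
            · omega
            · have hd := Nat.dvd_sub ⟨2^a' * (2*s'+1), hj'⟩ hkn
              simp only [Nat.add_sub_cancel] at hd
              exact hkj hd
          have e2 : u.ev j = false := by
            rw [← Bool.not_eq_true, hu]
            rintro (h0 | ⟨a', s', hj', _⟩)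
            · omega
            · exact hkj ⟨2^a' * (2*s'+1), hj'⟩
          rw [e1, e2]
    refine ⟨n - m, by omega, hstep, ?_⟩
    have hmn : m + (n - m) = n := by omega
    rw [hmn]
    have hag2 : ∀ j, j < L → (Cant.shift^[n] u).ev j = u.ev j := by
      intro j hj
      rw [Cant.shift_iterate]
      exact hagree j hj
    calc dist (Cant.shift^[n] u) u ≤ (1/2 : ℝ)^L := Cant.dist_le_of_agree hag2
      _ < ε := hL
  -- build the minimal system
  obtain ⟨Sys, z, π, hπc, hπz, hπiter⟩ :=
    exists_minSystem_of_unifRecurrent Cant.continuous_shift u hUR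
  refine ⟨Sys, z, π ⁻¹' {w : Cant | w.ev 0 = true}, (Cant.isOpen_ev0 true).preimage hπc, ?_, ?_⟩
  · show (π z).ev 0 = true
    rw [hπz]
    exact (hu 0).2 (Or.inl rfl)
  · intro n hn
    have hp := hπiter z (n : ℕ)
    rw [hπz] at hp
    have h2 : (Cant.shift^[(n : ℕ)] u).ev 0 = true := by
      rw [← hp]; exact hn
    rw [Cant.shift_iterate, Nat.zero_add, hu] at h2
    rcases h2 with h0 | ⟨a, s, hdec, hai⟩
    · exact absurd h0 n.ne_zero
    · exact ⟨a, s, hdec, hai⟩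

end Arithmetic

/-- **Theorem D.** Every dynamically central syndetic set can be partitioned into infinitely
many pairwise disjoint dynamically central syndetic sets. -/
theorem dynCentralSyndetic_partition (A : Set ℕ+) (hA : DynCentralSyndetic A) :
    ∃ P : ℕ → Set ℕ+,
      (∀ i, DynCentralSyndetic (P i)) ∧
      (∀ i j, i ≠ j → Disjoint (P i) (P j)) ∧
      A = ⋃ i, P i := by
  classical
  obtain ⟨S, x, U, hU, hxU, hsub⟩ := hA
  have hQ : ∃ Q : ℕ → Set ℕ+, (∀ i, DynCentralSyndetic (Q i)) ∧
      (∀ i j, i ≠ j → Disjoint (Q i) (Q j)) ∧ ∀ i, Q i ⊆ A := by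
    by_cases hiso : ∀ ε : ℝ, 0 < ε → ∃ p : S.X, p ≠ x ∧ dist p x < ε
    · obtain ⟨Q, h1, h2, h3⟩ := disjoint_central_family S.cont S.minimal x hU hxU hiso
      exact ⟨Q, h1, h2, fun i => (h3 i).trans hsub⟩
    · push_neg at hiso
      obtain ⟨ε, hεpos, hε⟩ := hiso
      have hxopen : IsOpen ({x} : Set S.X) := by
        have hball : ({x} : Set S.X) = Metric.ball x ε := by
          ext p
          simp only [Set.mem_singleton_iff, Metric.mem_ball]
          constructor
          · rintro rfl
            simpa [dist_self] using hεpos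
          · intro hp
            by_contra hne
            exact absurd hp (not_lt.2 (hε p hne))
        rw [hball]
        exact Metric.isOpen_ball
      obtain ⟨N, hN⟩ := minimal_syndetic_returns S.cont S.minimal hxopen ⟨x, rfl⟩
      obtain ⟨k, hk1, _, hkfix⟩ := hN x
      have hfix : S.T^[k] x = x := hkfix
      have hdiv : {n : ℕ+ | k ∣ (n : ℕ)} ⊆ retTimes S.T x U := by
        intro n hn
        obtain ⟨m, hm⟩ := hn
        show S.T^[(n : ℕ)] x ∈ U
        rw [hm, Function.iterate_mul, Function.iterate_fixed hfix]
        exact hxU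
      obtain ⟨Q, h1, h2, h3⟩ := disjoint_central_family_periodic k hk1
      exact ⟨Q, h1, h2, fun i => ((h3 i).trans hdiv).trans hsub⟩
  obtain ⟨Q, hQc, hQd, hQA⟩ := hQ
  set Pf : ℕ → Set ℕ+ := fun n => if n = 0 then A \ ⋃ i, Q (i+1) else Q n with hPf
  have hPf0 : Pf 0 = A \ ⋃ i, Q (i+1) := by simp [hPf]
  have hPfs : ∀ n : ℕ, n ≠ 0 → Pf n = Q n := by
    intro n hn
    simp [hPf, hn]
  have hQ0sub : Q 0 ⊆ Pf 0 := by
    rw [hPf0]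
    intro a ha
    refine ⟨hQA 0 ha, ?_⟩
    intro hmem
    obtain ⟨s, ⟨i, rfl⟩, hs⟩ := hmem
    exact (Set.disjoint_left.1 (hQd 0 (i+1) (by omega))) ha hs
  refine ⟨Pf, ?_, ?_, ?_⟩
  · intro i
    cases i with
    | zero => exact dynCentralSyndetic_mono (hQc 0) hQ0sub
    | succ n => rw [hPfs (n+1) (by omega)]; exact hQc (n+1)
  · intro i j hij
    rcases Nat.eq_zero_or_pos i with rfl | hi
    · obtain ⟨j', rfl⟩ := Nat.exists_eq_succ_of_ne_zero (by omega : j ≠ 0)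
      rw [Set.disjoint_left, hPf0, hPfs (j'+1) (by omega)]
      intro a ha haj
      exact ha.2 (Set.mem_iUnion.2 ⟨j', haj⟩)
    · rcases Nat.eq_zero_or_pos j with rfl | hj
      · obtain ⟨i', rfl⟩ := Nat.exists_eq_succ_of_ne_zero (by omega : i ≠ 0)
        rw [Set.disjoint_left, hPfs (i'+1) (by omega), hPf0]
        intro a ha haj
        exact haj.2 (Set.mem_iUnion.2 ⟨i', ha⟩)
      · rw [hPfs i (by omega), hPfs j (by omega)]
        exact hQd i j hij
  · apply Set.Subset.antisymm
    · intro a ha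
      by_cases hmem : a ∈ ⋃ i, Q (i+1)
      · obtain ⟨s, ⟨i, rfl⟩, hs⟩ := hmem
        exact Set.mem_iUnion.2 ⟨i+1, by rw [hPfs (i+1) (by omega)]; exact hs⟩
      · exact Set.mem_iUnion.2 ⟨0, by rw [hPf0]; exact ⟨ha, hmem⟩⟩
    · intro a ha
      obtain ⟨s, ⟨i, rfl⟩, hs⟩ := ha
      have hs' : a ∈ Pf i := hs
      cases i with
      | zero => rw [hPf0] at hs'; exact hs'.1
      | succ n =>
        rw [hPfs (n+1) (by omega)] at hs'
        exact hQA (n+1) hs'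
end

section
/- There exist disjoint sets A, B ⊆ ℕ with A ∪ B = ℕ such that neither A nor B is a set of pointwise recurrence; in particular, the family of sets of pointwise recurrence is not partition regular. -/
open Set

/-- A family of subsets of `ℕ` is partition regular if whenever a member is written as a
finite union of sets, one of those sets is a member. -/
def PartitionRegular (F : Set (Set ℕ+)) : Prop :=
  ∀ A ∈ F, ∀ (k : ℕ) (C : Fin k → Set ℕ+), A = ⋃ i, C i → ∃ i, C i ∈ F


noncomputable section
namespace Sturm

def al : ℝ := Real.sqrt 2

lemma irr_k (k : ℕ) (hk : k ≠ 0) : Irrational ((k : ℝ) * al) :=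
  irrational_sqrt_two.natCast_mul hk

lemma fract_pos (k : ℕ) (hk : k ≠ 0) : 0 < Int.fract ((k:ℝ) * al) := by
  rcases lt_or_eq_of_le (Int.fract_nonneg ((k:ℝ) * al)) with h | h
  · exact h
  · exfalso
    have : ((k:ℝ) * al) = (⌊(k:ℝ) * al⌋ : ℤ) := by
      have := Int.floor_add_fract ((k:ℝ) * al)
      rw [← h] at this; linarith
    exact (irr_k k hk).ne_int _ this

lemma fract_ne_half (k : ℕ) (hk : k ≠ 0) : Int.fract ((k:ℝ) * al) ≠ 1/2 := by
  intro h
  refine (irr_k k hk) ⟨(⌊(k:ℝ) * al⌋ : ℚ) + 1/2, ?_⟩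
  have := Int.floor_add_fract ((k:ℝ) * al)
  push_cast
  rw [h] at this
  linarith

lemma fract_shift (x y : ℝ) : Int.fract (x + y) = Int.fract (Int.fract x + y) := by
  have h : Int.fract x + y = (x + y) - (⌊x⌋ : ℤ) := by
    have := Int.floor_add_fract x; linarith
  rw [h, Int.fract_sub_intCast]

-- Stage 1: Dirichlet via pigeonhole
lemma stage1 (δ : ℝ) (hδ : 0 < δ) :
    ∃ d : ℕ, d ≠ 0 ∧ (Int.fract ((d:ℝ) * al) < δ ∨ 1 - δ < Int.fract ((d:ℝ) * al)) := by
  obtain ⟨N, hN⟩ := exists_nat_gt (1/δ)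
  have hN0 : 0 < N := by
    by_contra h
    push_neg at h
    interval_cases N
    · simp at hN; linarith [one_div_pos.mpr hδ]
  have hNR : (0:ℝ) < N := by exact_mod_cast hN0
  have hinv : 1 / (N:ℝ) < δ := by
    rw [div_lt_iff₀ hNR]
    calc (1:ℝ) = (1/δ) * δ := by field_simp
    _ < N * δ := by apply mul_lt_mul_of_pos_right hN hδ
    _ = δ * N := by ring
  -- pigeonhole
  have hmaps : ∀ j ∈ Finset.range (N+1),
      (⌊Int.fract ((j:ℝ) * al) * N⌋.toNat) ∈ Finset.range N := by
    intro j _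
    rw [Finset.mem_range]
    have h1 : Int.fract ((j:ℝ) * al) * N < N := by
      have := Int.fract_lt_one ((j:ℝ) * al)
      nlinarith
    have h2 : (⌊Int.fract ((j:ℝ) * al) * N⌋ : ℝ) < N := lt_of_le_of_lt (Int.floor_le _) h1
    have h3 : ⌊Int.fract ((j:ℝ) * al) * N⌋ < (N:ℤ) := by exact_mod_cast h2
    omega
  obtain ⟨i, hi, j, hj, hij, heq⟩ := Finset.exists_ne_map_eq_of_card_lt_of_maps_to
    (by simp : (Finset.range N).card < (Finset.range (N+1)).card) hmaps
  -- wlog i < j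
  wlog hlt : i < j generalizing i j
  · exact this j hj i hi hij.symm heq.symm (by omega)
  set u := Int.fract ((i:ℝ) * al) with hu
  set v := Int.fract ((j:ℝ) * al) with hv
  have hbox : |v - u| < 1 / N := by
    have h1 : ⌊u * N⌋ = ⌊v * N⌋ := by
      have := heq
      have hnn : (0:ℤ) ≤ ⌊u * N⌋ :=
        Int.floor_nonneg.mpr (mul_nonneg (Int.fract_nonneg _) hNR.le)
      have hnn2 : (0:ℤ) ≤ ⌊v * N⌋ :=
        Int.floor_nonneg.mpr (mul_nonneg (Int.fract_nonneg _) hNR.le)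
      omega
    have l1 := Int.floor_le (u * N)
    have l2 := Int.lt_floor_add_one (u * N)
    have l3 := Int.floor_le (v * N)
    have l4 := Int.lt_floor_add_one (v * N)
    rw [h1] at l1 l2
    rw [abs_lt]
    constructor
    · rw [neg_lt, show -(v-u) = u - v by ring, lt_div_iff₀ hNR]; nlinarith
    · rw [lt_div_iff₀ hNR]; nlinarith
  set d := j - i with hd
  have hd0 : d ≠ 0 := by omega
  have hcast : ((d:ℕ):ℝ) * al = (j:ℝ) * al - (i:ℝ) * al := by
    have : ((d:ℕ):ℝ) = (j:ℝ) - i := by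
      rw [hd]; push_cast [Nat.cast_sub (le_of_lt hlt)]; ring
    rw [this]; ring
  have hfd : Int.fract ((d:ℝ) * al) = Int.fract (v - u) := by
    rw [hcast]
    have : (j:ℝ) * al - (i:ℝ) * al = (v - u) + (⌊(j:ℝ)*al⌋ - ⌊(i:ℝ)*al⌋ : ℤ) := by
      have e1 := Int.floor_add_fract ((j:ℝ)*al)
      have e2 := Int.floor_add_fract ((i:ℝ)*al)
      push_cast
      rw [hu, hv]; linarith
    rw [this, Int.fract_add_intCast]
  refine ⟨d, hd0, ?_⟩
  rcases lt_trichotomy (v - u) 0 with hc | hc | hc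
  · right
    have : Int.fract (v - u) = (v - u) + 1 := by
      have e1 : Int.fract ((v - u) + ((1:ℤ):ℝ)) = Int.fract (v - u) := Int.fract_add_intCast _ _
      have e2 : Int.fract ((v-u) + 1) = (v-u) + 1 := by
        rw [Int.fract_eq_self]
        constructor
        · have := abs_lt.mp hbox
          have h1n : 1/(N:ℝ) ≤ 1 := by
            rw [div_le_one hNR]; exact_mod_cast hN0
          linarith
        · linarith
      push_cast at e1
      rw [← e1, e2]
    rw [hfd, this]
    have := abs_lt.mp hbox
    have h1n : 1/(N:ℝ) ≤ δ := le_of_lt hinv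
    linarith
  · exfalso
    have : Int.fract ((d:ℝ) * al) = 0 := by rw [hfd, hc]; exact Int.fract_zero
    exact absurd this (ne_of_gt (fract_pos d hd0))
  · left
    have : Int.fract (v - u) = v - u := by
      rw [Int.fract_eq_self]
      refine ⟨le_of_lt hc, ?_⟩
      have := abs_lt.mp hbox
      have : 1/(N:ℝ) ≤ 1 := by
        rw [div_le_one hNR]; exact_mod_cast hN0
      linarith [abs_lt.mp hbox]
    rw [hfd, this]
    have := abs_lt.mp hbox
    linarith

/-- There is a positive integer whose fractional multiple of `al` is small positive. -/
lemma exists_fract_lt (δ : ℝ) (hδ : 0 < δ) :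
    ∃ d : ℕ, d ≠ 0 ∧ 0 < Int.fract ((d:ℝ) * al) ∧ Int.fract ((d:ℝ) * al) < δ := by
  obtain ⟨d, hd0, hcase⟩ := stage1 δ hδ
  rcases hcase with h | h
  · exact ⟨d, hd0, fract_pos d hd0, h⟩
  · -- boost: fract (d*al) = 1 - γ with 0 < γ < δ
    set γ : ℝ := 1 - Int.fract ((d:ℝ) * al) with hγ
    have hγ0 : 0 < γ := by
      have := Int.fract_lt_one ((d:ℝ) * al); simp [hγ]; linarith
    have hγδ : γ < δ := by simp [hγ]; linarith
    have hγ1 : γ < 1 := by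
      have := fract_pos d hd0; simp [hγ]; linarith
    -- let r := ⌈1/γ⌉₊ - 1, so r*γ < 1 ≤ (r+1)*γ
    set r : ℕ := ⌈1/γ⌉₊ - 1 with hr
    have hceil : 1 ≤ 1/γ := by
      rw [le_div_iff₀ hγ0]; linarith
    have hc1 : 1 ≤ ⌈1/γ⌉₊ := by
      exact Nat.one_le_ceil_iff.mpr (by linarith)
    have hr1 : r + 1 = ⌈1/γ⌉₊ := by omega
    have hup : (1:ℝ) ≤ (r+1) * γ := by
      have := Nat.le_ceil (1/γ)
      have h2 : ((r:ℝ)+1) = (⌈1/γ⌉₊ : ℝ) := by exact_mod_cast congrArg (Nat.cast (R := ℝ)) hr1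
      rw [h2]
      calc (1:ℝ) = (1/γ) * γ := by field_simp
      _ ≤ (⌈1/γ⌉₊:ℝ) * γ := by apply mul_le_mul_of_nonneg_right this hγ0.le
    have hdown : (r:ℝ) * γ < 1 := by
      have := Nat.ceil_lt_add_one (le_of_lt (by positivity : (0:ℝ) < 1/γ))
      have h2 : (r:ℝ) = (⌈1/γ⌉₊ : ℝ) - 1 := by
        have : ((r:ℝ)+1) = (⌈1/γ⌉₊ : ℝ) := by exact_mod_cast congrArg (Nat.cast (R := ℝ)) hr1
        linarith
      rw [h2]
      calc ((⌈1/γ⌉₊:ℝ) - 1) * γ < (1/γ) * γ := by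
            apply mul_lt_mul_of_pos_right _ hγ0
            linarith
      _ = 1 := by field_simp
    have hr0 : r ≠ 0 := by
      intro h
      rw [h] at hup; push_cast at hup
      linarith
    refine ⟨r * d, by positivity, ?_⟩
    have key : ((r*d : ℕ):ℝ) * al = (1 - (r:ℝ)*γ) + ((r * ⌊(d:ℝ)*al⌋ + r - 1 : ℤ) : ℝ) := by
      have e := Int.floor_add_fract ((d:ℝ)*al)
      push_cast
      have : Int.fract ((d:ℝ)*al) = 1 - γ := by rw [hγ]; ring
      nlinarith [this, e]
    rw [key, Int.fract_add_intCast, Int.fract_eq_self.mpr ⟨by linarith, by nlinarith⟩]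
    constructor
    · linarith
    · nlinarith [hup]

/-- Syndeticity of `{k | fract (k al) ∈ [g, g+δ)}`. -/
lemma syndetic_hit (g δ : ℝ) (hg : 0 ≤ g) (hδ : 0 < δ) (h1 : g + δ ≤ 1) :
    ∃ L : ℕ, ∀ N : ℕ, ∃ k : ℕ, N ≤ k ∧ k ≤ N + L ∧
      g ≤ Int.fract ((k:ℝ) * al) ∧ Int.fract ((k:ℝ) * al) < g + δ := by
  obtain ⟨d, hd0, hγ0, hγδ⟩ := exists_fract_lt δ hδ
  set γ := Int.fract ((d:ℝ) * al) with hγ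
  refine ⟨d * ⌈(2:ℝ)/γ⌉₊, fun N => ?_⟩
  set v := Int.fract ((N:ℝ) * al) with hv
  have hv0 : 0 ≤ v := Int.fract_nonneg _
  have hv1 : v < 1 := Int.fract_lt_one _
  set p : ℕ := if v < g then 0 else 1 with hp
  set c : ℝ := g + p with hc
  have hvc : v < c := by
    rw [hc, hp]
    split
    · simpa using (by assumption : v < g)
    · push_cast; linarith
  have hc2 : c ≤ g + 1 := by
    rw [hc, hp]; split <;> push_cast <;> linarith
  set r : ℕ := ⌈(c - v)/γ⌉₊ with hr
  have hrup : c - v ≤ (r:ℝ) * γ := by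
    have := Nat.le_ceil ((c-v)/γ)
    calc c - v = ((c-v)/γ) * γ := by field_simp
    _ ≤ (r:ℝ) * γ := mul_le_mul_of_nonneg_right this hγ0.le
  have hrdown : (r:ℝ) * γ < c - v + γ := by
    have := Nat.ceil_lt_add_one (a := (c-v)/γ) (le_of_lt (div_pos (by linarith) hγ0))
    calc (r:ℝ) * γ < ((c-v)/γ + 1) * γ := mul_lt_mul_of_pos_right this hγ0
    _ = c - v + γ := by field_simp
  have hrle : r ≤ ⌈(2:ℝ)/γ⌉₊ := by
    apply Nat.ceil_le_ceil
    rw [div_le_div_iff₀ hγ0 hγ0]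
    nlinarith
  refine ⟨N + r * d, Nat.le_add_right _ _, ?_, ?_, ?_⟩
  · have h2 := Nat.mul_le_mul_right d hrle
    calc N + r * d ≤ N + ⌈(2:ℝ)/γ⌉₊ * d := by omega
    _ = N + d * ⌈(2:ℝ)/γ⌉₊ := by rw [Nat.mul_comm]
  all_goals {
    have key : ((N + r*d : ℕ):ℝ) * al =
        (v + (r:ℝ)*γ - p) + ((⌊(N:ℝ)*al⌋ + r * ⌊(d:ℝ)*al⌋ + p : ℤ) : ℝ) := by
      have e1 := Int.floor_add_fract ((N:ℝ)*al)
      have e2 := Int.floor_add_fract ((d:ℝ)*al)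
      rw [← hv] at e1
      rw [← hγ] at e2
      push_cast
      linear_combination -e1 - (r:ℝ) * e2
    have hb1 : g ≤ v + (r:ℝ)*γ - p := by
      have : c ≤ v + (r:ℝ)*γ := by linarith
      rw [hc] at this; linarith
    have hb2 : v + (r:ℝ)*γ - p < g + δ := by
      have : v + (r:ℝ)*γ < c + γ := by linarith
      rw [hc] at this; linarith
    rw [key, Int.fract_add_intCast, Int.fract_eq_self.mpr ⟨by linarith, by linarith⟩]
    first
    | exact hb1
    | linarith
  }

def sw : ℕ → Bool := fun n => decide (Int.fract ((n:ℝ) * al) < 1/2)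

/-- Occurrences of the factor `sw [m..m+n)` in `sw` are syndetic. -/
lemma occ_syndetic (m n : ℕ) : ∃ L : ℕ, ∀ N : ℕ, ∃ k, N ≤ k ∧ k ≤ N + L ∧
    ∀ i < n, sw (k + i) = sw (m + i) := by
  rcases Nat.eq_zero_or_pos n with hn | hn
  · exact ⟨0, fun N => ⟨N, le_refl N, Nat.le_add_right _ _, by omega⟩⟩
  have hne : (Finset.range n).Nonempty := ⟨0, Finset.mem_range.mpr hn⟩
  set e : ℕ → ℝ := fun i =>
    if Int.fract (((m+i : ℕ):ℝ) * al) < 1/2 then 1/2 - Int.fract (((m+i:ℕ):ℝ) * al)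
    else 1 - Int.fract (((m+i:ℕ):ℝ) * al) with he
  set δ := (Finset.range n).inf' hne e with hδdef
  have hepos : ∀ i ∈ Finset.range n, 0 < e i := by
    intro i _
    rw [he]
    dsimp only
    split
    · linarith [(by assumption : Int.fract (((m+i:ℕ):ℝ) * al) < 1/2)]
    · linarith [Int.fract_lt_one (((m+i:ℕ):ℝ) * al)]
  have hδpos : 0 < δ := by
    rw [hδdef, Finset.lt_inf'_iff]
    exact hepos
  have hδle : ∀ i ∈ Finset.range n, δ ≤ e i := fun i hi => Finset.inf'_le _ hi
  have hg0 : 0 ≤ Int.fract ((m:ℝ) * al) := Int.fract_nonneg _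
  have hgδ : Int.fract ((m:ℝ) * al) + δ ≤ 1 := by
    have h0 := hδle 0 (Finset.mem_range.mpr hn)
    rw [he] at h0
    dsimp only at h0
    have hm0 : ((m+0:ℕ):ℝ) = (m:ℝ) := by norm_num
    rw [hm0] at h0
    split at h0 <;> linarith
  obtain ⟨L, hL⟩ := syndetic_hit (Int.fract ((m:ℝ) * al)) δ hg0 hδpos hgδ
  refine ⟨L, fun N => ?_⟩
  obtain ⟨k, hk1, hk2, hk3, hk4⟩ := hL N
  refine ⟨k, hk1, hk2, fun i hi => ?_⟩
  have hδei := hδle i (Finset.mem_range.mpr hi)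
  rw [he] at hδei
  dsimp only at hδei
  -- abbreviations as plain terms
  have ht0 : 0 ≤ Int.fract ((k:ℝ)*al) - Int.fract ((m:ℝ)*al) := by linarith
  have htδ : Int.fract ((k:ℝ)*al) - Int.fract ((m:ℝ)*al) < δ := by linarith
  have c1 : ((k+i:ℕ):ℝ) * al = (k:ℝ) * al + (i:ℝ) * al := by push_cast; ring
  have c2 : ((m+i:ℕ):ℝ) * al = (m:ℝ) * al + (i:ℝ) * al := by push_cast; ring
  have e4 : Int.fract (Int.fract ((m:ℝ)*al) + (i:ℝ)*al) = Int.fract (((m+i:ℕ):ℝ) * al) := by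
    rw [← fract_shift, ← c2]
  have key : Int.fract (((k+i:ℕ):ℝ) * al)
      = Int.fract (Int.fract (((m+i:ℕ):ℝ) * al)
          + (Int.fract ((k:ℝ)*al) - Int.fract ((m:ℝ)*al))) := by
    calc Int.fract (((k+i:ℕ):ℝ) * al) = Int.fract ((k:ℝ)*al + (i:ℝ)*al) := by rw [c1]
    _ = Int.fract (Int.fract ((k:ℝ)*al) + (i:ℝ)*al) := fract_shift _ _
    _ = Int.fract ((Int.fract ((m:ℝ)*al) + (i:ℝ)*al)
          + (Int.fract ((k:ℝ)*al) - Int.fract ((m:ℝ)*al))) := by ring_nf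
    _ = Int.fract (Int.fract (Int.fract ((m:ℝ)*al) + (i:ℝ)*al)
          + (Int.fract ((k:ℝ)*al) - Int.fract ((m:ℝ)*al))) :=
        fract_shift _ _
    _ = _ := by rw [e4]
  set E := Int.fract (((m+i:ℕ):ℝ) * al) with hE
  set t := Int.fract ((k:ℝ)*al) - Int.fract ((m:ℝ)*al) with hT
  have hE0 : 0 ≤ E := Int.fract_nonneg _
  have hE1 : E < 1 := Int.fract_lt_one _
  by_cases hcase : E < 1/2
  · rw [if_pos hcase] at hδei
    have hsum : E + t < 1/2 := by linarith
    have hfr : Int.fract (E + t) = E + t := Int.fract_eq_self.mpr ⟨by linarith, by linarith⟩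
    unfold sw
    rw [key, hfr]
    simp only [decide_eq_decide]
    exact iff_of_true hsum hcase
  · rw [if_neg hcase] at hδei
    push_neg at hcase
    have hsum : ¬ (E + t < 1/2) := by push_neg; linarith
    have hfr : Int.fract (E + t) = E + t := Int.fract_eq_self.mpr ⟨by linarith, by linarith⟩
    unfold sw
    rw [key, hfr]
    simp only [decide_eq_decide]
    exact iff_of_false hsum (by push_neg; linarith)

abbrev Seq := ℕ → Bool

def seqMS : MetricSpace Seq := PiNat.metricSpace

example : seqMS.toUniformSpace.toTopologicalSpace = (inferInstance : TopologicalSpace Seq) := rfl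

def win : ℕ → Seq := fun m n => sw (m + n)
def SX : Set Seq := closure (Set.range win)
def X : Type := {f : Seq // f ∈ SX}

instance : TopologicalSpace X := by unfold X; infer_instance
instance XMS : MetricSpace X := by
  letI : MetricSpace Seq := seqMS
  unfold X; infer_instance

example : (XMS.toUniformSpace.toTopologicalSpace) = (inferInstance : TopologicalSpace X) := rfl

instance : CompactSpace X := by
  unfold X
  exact isCompact_iff_compactSpace.mp (isClosed_closure.isCompact)

instance : Nonempty X := ⟨⟨win 0, subset_closure ⟨0, rfl⟩⟩⟩

def shift : Seq → Seq := fun f n => f (n + 1)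

lemma shift_cont : Continuous shift := continuous_pi fun n => continuous_apply (n + 1)

lemma shift_mapsTo : Set.MapsTo shift SX SX := by
  have h : Set.MapsTo shift (Set.range win) (Set.range win) := by
    rintro _ ⟨m, rfl⟩
    refine ⟨m + 1, funext fun n => ?_⟩
    show sw ((m+1) + n) = sw (m + (n+1))
    exact congrArg sw (by omega)
  exact h.closure shift_cont


def T : X → X := fun f => ⟨shift f.1, shift_mapsTo f.2⟩

lemma T_cont : Continuous T :=
  Continuous.subtype_mk (shift_cont.comp continuous_subtype_val) _

lemma T_iter_val (j : ℕ) (x : X) : (T^[j] x).1 = fun n => x.1 (n + j) := by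
  induction j with
  | zero => simp
  | succ j ih =>
    rw [Function.iterate_succ_apply']
    show shift (T^[j] x).1 = fun n => x.1 (n + (j+1))
    rw [ih]
    funext n
    exact congrArg x.1 (by omega : (n+1) + j = n + (j+1))


lemma cyl_open (Q : ℕ) (f : Seq) : IsOpen {z : Seq | ∀ q < Q, z q = f q} := by
  have : {z : Seq | ∀ q < Q, z q = f q} = ⋂ (q : Fin Q), {z : Seq | z q.1 = f q.1} := by
    ext z
    simp only [Set.mem_setOf_eq, Set.mem_iInter]
    exact ⟨fun h q => h q.1 q.2, fun h q hq => h ⟨q, hq⟩⟩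
  rw [this]
  refine isOpen_iInter_of_finite fun q => ?_
  have : {z : Seq | z q.1 = f q.1} = (fun z : Seq => z q.1) ⁻¹' {f q.1} := by
    ext z; simp
  rw [this]
  exact IsOpen.preimage (continuous_apply (q.1 : ℕ)) (isOpen_discrete ({f q.1} : Set Bool))

lemma mem_SX_iff (f : Seq) : f ∈ SX ↔ ∀ Q : ℕ, ∃ m : ℕ, ∀ q < Q, sw (m + q) = f q := by
  constructor
  · intro hf Q
    have hmem := mem_closure_iff.mp hf {z : Seq | ∀ q < Q, z q = f q} (cyl_open Q f)
      (fun q _ => rfl)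
    obtain ⟨z, hz, m, rfl⟩ := hmem
    exact ⟨m, fun q hq => hz q hq⟩
  · intro h
    rw [SX, mem_closure_iff]
    intro o ho hfo
    obtain ⟨I, u, hIu, hpi⟩ := isOpen_pi_iff.mp ho f hfo
    obtain ⟨m, hm⟩ := h (I.sup id + 1)
    refine ⟨win m, hpi fun i hi => ?_, ⟨m, rfl⟩⟩
    have : win m i = f i := hm i (by
      have : i ≤ I.sup id := Finset.le_sup (f := id) hi
      omega)
    rw [this]
    exact (hIu i hi).2


lemma T_minimal : ∀ x : X, Dense (Set.range fun n : ℕ+ => T^[(n:ℕ)] x) := by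
  intro x
  rw [dense_iff_inter_open]
  rintro U hU ⟨z, hz⟩
  obtain ⟨V, hVopen, rfl⟩ := isOpen_induced_iff.mp hU
  obtain ⟨I, u, hIu, hpi⟩ := isOpen_pi_iff.mp hVopen z.1 hz
  set n := I.sup id + 1 with hn
  obtain ⟨m, hm⟩ := (mem_SX_iff z.1).mp z.2 n
  obtain ⟨L, hL⟩ := occ_syndetic m n
  obtain ⟨i0, hi0⟩ := (mem_SX_iff x.1).mp x.2 (1 + L + n)
  obtain ⟨k, hk1, hk2, hk3⟩ := hL (i0 + 1)
  have hki : i0 < k := by omega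
  refine ⟨T^[k - i0] x, ?_, ⟨⟨k - i0, by omega⟩, rfl⟩⟩
  show (T^[k - i0] x).1 ∈ V
  apply hpi
  intro q hq
  have hqn : q < n := by
    have : q ≤ I.sup id := Finset.le_sup (f := id) hq
    omega
  have h1 : (T^[k - i0] x).1 q = x.1 (q + (k - i0)) := by rw [T_iter_val]
  have h2 : x.1 (q + (k - i0)) = sw (i0 + (q + (k - i0))) := (hi0 (q + (k - i0)) (by omega)).symm
  have h3 : sw (i0 + (q + (k - i0))) = sw (k + q) := congrArg sw (by omega)
  have h4 : sw (k + q) = sw (m + q) := hk3 q hqn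
  have h5 : sw (m + q) = z.1 q := hm q hqn
  rw [h1, h2, h3, h4, h5]
  exact (hIu q hq).2



def ypt : ℕ → Bool := fun k => decide (k = 0 ∨ 1/2 < Int.fract ((k:ℝ) * al))

lemma ypt_approx : ∀ Q : ℕ, ∃ m : ℕ, ∀ q < Q, sw (m + q) = ypt q := by
  intro Q
  rcases Nat.eq_zero_or_pos Q with hQ | hQ
  · exact ⟨0, by omega⟩
  have hne : (Finset.range Q).Nonempty := ⟨0, Finset.mem_range.mpr hQ⟩
  set e : ℕ → ℝ := fun q =>
    if q = 0 then 1/2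
    else if Int.fract ((q:ℝ)*al) < 1/2 then Int.fract ((q:ℝ)*al)
    else Int.fract ((q:ℝ)*al) - 1/2 with he
  set η := (Finset.range Q).inf' hne e / 2 with hη
  have hepos : ∀ q ∈ Finset.range Q, 0 < e q := by
    intro q _
    rw [he]
    dsimp only
    rcases Nat.eq_zero_or_pos q with h0 | h0
    · simp [h0]
    · rw [if_neg (by omega)]
      split
      · exact fract_pos q (by omega)
      · have h2 := fract_ne_half q (by omega)
        have h3 : ¬ Int.fract ((q:ℝ)*al) < 1/2 := by assumption
        push_neg at h3
        rcases lt_or_eq_of_le h3 with h4 | h4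
        · linarith
        · exact absurd h4.symm h2
  have hinfpos : 0 < (Finset.range Q).inf' hne e := (Finset.lt_inf'_iff hne).mpr hepos
  have hηpos : 0 < η := by rw [hη]; linarith
  have hηle : ∀ q ∈ Finset.range Q, 2 * η ≤ e q := by
    intro q hq
    have := Finset.inf'_le e hq
    rw [hη]; linarith
  have hη14 : η ≤ 1/4 := by
    have := hηle 0 (Finset.mem_range.mpr hQ)
    rw [he] at this
    norm_num at this
    linarith
  obtain ⟨L, hL⟩ := syndetic_hit (1/2 - η) η (by linarith) hηpos (by linarith)
  obtain ⟨m, -, -, hm1, hm2⟩ := hL 0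
  refine ⟨m, fun q hq => ?_⟩
  rcases Nat.eq_zero_or_pos q with h0 | h0
  · subst h0
    have : sw (m + 0) = true := by
      unfold sw
      simp only [Nat.add_zero, decide_eq_true_eq]
      linarith
    rw [this]
    unfold ypt
    simp
  · -- q ≥ 1
    have hq0 : q ≠ 0 := by omega
    have heq : 2 * η ≤ e q := hηle q (Finset.mem_range.mpr hq)
    rw [he] at heq
    dsimp only at heq
    rw [if_neg hq0] at heq
    have key : Int.fract (((m+q:ℕ):ℝ) * al)
        = Int.fract (Int.fract ((q:ℝ)*al) + Int.fract ((m:ℝ)*al)) := by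
      calc Int.fract (((m+q:ℕ):ℝ) * al) = Int.fract ((q:ℝ)*al + (m:ℝ)*al) := by push_cast; ring_nf
      _ = Int.fract (Int.fract ((q:ℝ)*al) + (m:ℝ)*al) := fract_shift _ _
      _ = Int.fract ((m:ℝ)*al + Int.fract ((q:ℝ)*al)) := by ring_nf
      _ = Int.fract (Int.fract ((m:ℝ)*al) + Int.fract ((q:ℝ)*al)) := fract_shift _ _
      _ = _ := by ring_nf
    set F := Int.fract ((q:ℝ)*al) with hF
    set c := Int.fract ((m:ℝ)*al) with hc
    have hF0 : 0 < F := fract_pos q hq0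
    have hF1 : F < 1 := Int.fract_lt_one _
    unfold sw ypt
    rw [key]
    split at heq
    · -- F < 1/2, so target false on both sides
      have hFlt : F < 1/2 := by assumption
      have hv : Int.fract (F + c) = F + c := by
        rw [Int.fract_eq_self]
        constructor
        · linarith
        · linarith
      rw [hv]
      simp only [decide_eq_decide]
      constructor
      · intro h; exfalso; linarith
      · rintro (h | h)
        · exact absurd h hq0
        · exfalso; linarith
    · -- F > 1/2
      have hFge : ¬ F < 1/2 := by assumption
      push_neg at hFge
      have hFne : F ≠ 1/2 := fract_ne_half q hq0
      have hFgt : 1/2 < F := lt_of_le_of_ne hFge (Ne.symm hFne)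
      have hv : Int.fract (F + c) = F + c - 1 := by
        have e1 : Int.fract ((F + c) - ((1:ℤ):ℝ)) = Int.fract (F + c) := Int.fract_sub_intCast _ _
        have e2 : Int.fract ((F + c) - 1) = (F + c) - 1 := by
          rw [Int.fract_eq_self]
          constructor
          · linarith
          · linarith
        push_cast at e1
        rw [← e1, e2]
      rw [hv]
      simp only [decide_eq_decide]
      constructor
      · intro h; right; exact hFgt
      · intro h; linarith
  

lemma ypt_mem : ypt ∈ SX := (mem_SX_iff ypt).mpr ypt_approx

/-- The Sturmian minimal system. -/
def SturmSys : MinSystem where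
  X := X
  cpt := by exact (inferInstance : CompactSpace X)
  T := T
  cont := T_cont
  minimal := T_minimal

def U : Set X := {z : X | z.1 0 = true}

lemma U_open : IsOpen U := by
  have : U = (fun z : X => z.1 0) ⁻¹' {true} := by ext z; simp [U]
  rw [this]
  exact IsOpen.preimage ((continuous_apply 0).comp continuous_subtype_val)
    (isOpen_discrete _)

def Aset : Set ℕ+ := {n : ℕ+ | Int.fract (((n:ℕ):ℝ) * al) < 1/2}

lemma not_pr_A : ¬ PointwiseRecurrent Aset := by
  intro h
  obtain ⟨a, haA, hrec⟩ := h SturmSys ⟨ypt, ypt_mem⟩ U U_open (by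
    show ypt 0 = true
    unfold ypt
    simp)
  have h1 : (SturmSys.T^[(a:ℕ)] ⟨ypt, ypt_mem⟩).1 0 = ypt (0 + (a:ℕ)) := by
    exact congrFun (T_iter_val _ _) 0
  have h2 : ypt (0 + (a:ℕ)) = false := by
    unfold ypt
    simp only [Nat.zero_add, decide_eq_false_iff_not]
    push_neg
    refine ⟨?_, ?_⟩
    · exact a.pos.ne'
    · have : Int.fract (((a:ℕ):ℝ) * al) < 1/2 := haA
      linarith
  have h3 : (SturmSys.T^[(a:ℕ)] ⟨ypt, ypt_mem⟩).1 0 = true := hrec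
  rw [h1, h2] at h3
  exact absurd h3 (by simp)

lemma not_pr_B : ¬ PointwiseRecurrent Asetᶜ := by
  intro h
  have hx0 : win 0 ∈ SX := subset_closure ⟨0, rfl⟩
  obtain ⟨a, haB, hrec⟩ := h SturmSys ⟨win 0, hx0⟩ U U_open (by
    show win 0 0 = true
    unfold win sw
    norm_num)
  have h1 : (SturmSys.T^[(a:ℕ)] ⟨win 0, hx0⟩).1 0 = win 0 (0 + (a:ℕ)) := by
    exact congrFun (T_iter_val _ _) 0
  have h2 : win 0 (0 + (a:ℕ)) = false := by
    unfold win sw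
    simp only [Nat.zero_add, decide_eq_false_iff_not]
    have : ¬ Int.fract (((a:ℕ):ℝ) * al) < 1/2 := haB
    push_neg at this ⊢
    first
    | exact this
    | (convert this using 3; omega)
  have h3 : (SturmSys.T^[(a:ℕ)] ⟨win 0, hx0⟩).1 0 = true := hrec
  rw [h1, h2] at h3
  exact absurd h3 (by simp)

lemma pr_univ : PointwiseRecurrent Set.univ := by
  intro S x V hV hxV
  have hdense := S.minimal x
  obtain ⟨p, hpV, hp⟩ := hdense.inter_open_nonempty V hV ⟨x, hxV⟩
  obtain ⟨n, rfl⟩ := hp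
  exact ⟨n, Set.mem_univ n, hpV⟩

end Sturm
end

/-- There are disjoint sets `A, B ⊆ ℕ` with `A ∪ B = ℕ` such that neither `A` nor `B` is a
set of pointwise recurrence; in particular the family of sets of pointwise recurrence is not
partition regular. -/
theorem pointwiseRecurrent_not_partitionRegular :
    (∃ A B : Set ℕ+, Disjoint A B ∧ A ∪ B = Set.univ ∧
      ¬ PointwiseRecurrent A ∧ ¬ PointwiseRecurrent B) ∧
    ¬ PartitionRegular {A : Set ℕ+ | PointwiseRecurrent A} := by
  constructor
  · refine ⟨Sturm.Aset, Sturm.Asetᶜ, disjoint_compl_right, Set.union_compl_self _,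
      Sturm.not_pr_A, Sturm.not_pr_B⟩
  · intro hPR
    obtain ⟨i, hi⟩ := hPR Set.univ Sturm.pr_univ 2
      (fun i => if i = 0 then Sturm.Aset else Sturm.Asetᶜ)
      (by
        ext n
        simp only [Set.mem_univ, Set.mem_iUnion, true_iff]
        by_cases h : n ∈ Sturm.Aset
        · exact ⟨0, by simpa using h⟩
        · exact ⟨1, by simpa using h⟩)
    fin_cases i
    · exact Sturm.not_pr_A (by simpa using hi)
    · exact Sturm.not_pr_B (by simpa using hi)
end

section
/- Let A ⊆ ℕ. The following are equivalent: (1) A is a set of pointwise recurrence; (2) for every B ⊆ ℕ with A ⊆ B there exists a finite set F ⊆ ℕ ∖ B such that the set B ∪ (B − F) is thick; (3) for every syndetic set S ⊆ ℕ there exists a finite set F ⊆ A such that for every syndetic set S' ⊆ S one has F ∩ (S − S') ≠ ∅. -/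
open Set

section PRAux
open Set

/-- ℕ-side syndeticity: every window `(m, m+N]` meets `D`. -/
def SynN (D : Set ℕ) : Prop := ∃ N : ℕ, ∀ m : ℕ, ∃ t, m < t ∧ t ≤ m + N ∧ t ∈ D

/-- the image of a set of positive integers in ℕ. -/
def natSet (A : Set ℕ+) : Set ℕ := {n : ℕ | ∃ h : 0 < n, (⟨n, h⟩ : ℕ+) ∈ A}

lemma coe_mem_natSet {A : Set ℕ+} {t : ℕ+} : (t : ℕ) ∈ natSet A ↔ t ∈ A := by
  constructor
  · rintro ⟨h, hm⟩
    exact hm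
  · intro ht
    exact ⟨t.2, by exact ht⟩

lemma mem_natSet_iff {A : Set ℕ+} {n : ℕ} (hn : 0 < n) :
    n ∈ natSet A ↔ (⟨n, hn⟩ : ℕ+) ∈ A := ⟨fun ⟨_, h⟩ => h, fun h => ⟨hn, h⟩⟩

lemma syndetic_unfold {A : Set ℕ+} :
    Syndetic A ↔ ∃ N : ℕ+, ∀ m : ℕ+, m ∈ A ∨ ∃ k : ℕ+, k ≤ N ∧ m + k ∈ A := by
  unfold Syndetic
  refine exists_congr fun N => ?_
  rw [eq_univ_iff_forall]
  refine forall_congr' fun m => ?_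
  simp [shiftN, mem_iUnion]

lemma syndetic_iff_synN {A : Set ℕ+} : Syndetic A ↔ SynN (natSet A) := by
  rw [syndetic_unfold]
  constructor
  · rintro ⟨N, hN⟩
    refine ⟨(N : ℕ) + 1, fun m => ?_⟩
    have hp1 : 0 < m + 1 := Nat.succ_pos m
    set p : ℕ+ := ⟨m + 1, hp1⟩ with hp
    rcases hN p with h | ⟨k, hk, hmk⟩
    · exact ⟨m + 1, Nat.lt_succ_self m, by omega, Nat.succ_pos m, h⟩
    · refine ⟨m + 1 + (k : ℕ), by omega, ?_, ?_⟩
      · have : (k : ℕ) ≤ (N : ℕ) := hk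
        omega
      · have hpos : 0 < m + 1 + (k : ℕ) := by omega
        rw [mem_natSet_iff hpos]
        have heq : (⟨m + 1 + (k : ℕ), hpos⟩ : ℕ+) = p + k := by
          apply Subtype.ext
          show m + 1 + (k : ℕ) = ((p + k : ℕ+) : ℕ)
          rw [PNat.add_coe]
          rfl
        rw [heq]; exact hmk
  · rintro ⟨N, hN⟩
    refine ⟨⟨N + 1, Nat.succ_pos N⟩, fun m => ?_⟩
    rcases hN (m : ℕ) with ⟨t, hmt, htN, ht⟩
    right
    have hj : 0 < t - (m : ℕ) := by omega
    refine ⟨⟨t - (m : ℕ), hj⟩, ?_, ?_⟩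
    · change t - (m : ℕ) ≤ N + 1
      show t - (m : ℕ) ≤ N + 1
      omega
    · have hpos : 0 < t := lt_of_le_of_lt (Nat.zero_le _) hmt
      rcases ht with ⟨hp2, ht'⟩
      have heq : ∀ k : ℕ+, (k : ℕ) = t - (m : ℕ) → m + k = (⟨t, hp2⟩ : ℕ+) := by
        intro k hk
        apply Subtype.ext
        show (m : ℕ) + (k : ℕ) = t
        omega
      rw [heq ⟨t - (m : ℕ), hj⟩ rfl]; exact ht'

lemma Syndetic.mono {A B : Set ℕ+} (h : Syndetic A) (hAB : A ⊆ B) : Syndetic B := by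
  rw [syndetic_unfold] at h ⊢
  rcases h with ⟨N, hN⟩
  exact ⟨N, fun m => (hN m).imp (fun h => hAB h) (fun ⟨k, hk, hmk⟩ => ⟨k, hk, hAB hmk⟩)⟩

lemma syndetic_compl_of_not_thick {A : Set ℕ+} (h : ¬ Thick A) : Syndetic Aᶜ := by
  rw [syndetic_unfold]
  unfold Thick at h
  push_neg at h
  rcases h with ⟨F, hF⟩
  refine ⟨F.sup id + 1, fun m => ?_⟩
  rcases hF m with ⟨f, hfF, hfm⟩
  right
  refine ⟨f, ?_, by rwa [add_comm]⟩
  calc f = id f := rfl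
  _ ≤ F.sup id := Finset.le_sup hfF
  _ ≤ F.sup id + 1 := by rw [← PNat.coe_le_coe]; simp

lemma not_thick_of_syndetic_compl {A : Set ℕ+} (h : Syndetic Aᶜ) : ¬ Thick A := by
  rw [syndetic_unfold] at h
  rcases h with ⟨N, hN⟩
  intro hT
  rcases hT (Finset.Icc 1 (N + 1)) with ⟨n, hn⟩
  rcases hN (n + 1) with hmem | ⟨k, hk, hmk⟩
  · exact hmem (by simpa [add_comm] using hn 1 (by simp [Finset.mem_Icc, PNat.one_le]))
  · refine hmk ?_
    have h1k : (1 : ℕ+) + k ∈ Finset.Icc 1 (N + 1) := by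
      simp only [Finset.mem_Icc]
      exact ⟨PNat.one_le _, by calc (1:ℕ+) + k = k + 1 := add_comm _ _
        _ ≤ N + 1 := add_le_add hk le_rfl⟩
    have := hn (1 + k) h1k
    convert this using 1
    show n + 1 + k = 1 + k + n
    ring

end PRAux

section Machine
open Set Function

noncomputable local instance OmegaMetric : MetricSpace (ℕ → ℝ) := PiCountable.metricSpace

/-- the shift map on `ℕ → ℝ`. -/
def shmap : (ℕ → ℝ) → (ℕ → ℝ) := fun w n => w (n + 1)

lemma shmap_continuous : Continuous shmap :=
  continuous_pi fun n => continuous_apply (n + 1)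

lemma shmap_iter_apply (k : ℕ) (w : ℕ → ℝ) (n : ℕ) : shmap^[k] w n = w (n + k) := by
  induction k generalizing w with
  | zero => rfl
  | succ k ih =>
      rw [Function.iterate_succ_apply]
      rw [ih (shmap w)]
      show w (n + k + 1) = w (n + (k + 1))
      ring_nf

/-- the 0-1 cube. -/
def cube : Set (ℕ → ℝ) := {w | ∀ n, w n = 0 ∨ w n = 1}

lemma cube_compact : IsCompact cube := by
  have : cube = Set.pi univ (fun _ : ℕ => ({0, 1} : Set ℝ)) := by
    ext w
    simp [cube, Set.mem_pi, Set.mem_insert_iff]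
  rw [this]
  exact isCompact_univ_pi fun _ => (Set.finite_singleton 1 |>.insert 0).isCompact

lemma cube_closed : IsClosed cube := cube_compact.isClosed

lemma shmap_mapsTo_cube : MapsTo shmap cube cube := fun w hw n => hw (n + 1)

/-- existence of a minimal subsystem inside a nonempty compact invariant set. -/
lemma exists_minimal_subsystem {K : Set (ℕ → ℝ)} (hKne : K.Nonempty) (hKcl : IsClosed K)
    (hKcpt : IsCompact K) (hKinv : MapsTo shmap K K) :
    ∃ M ⊆ K, M.Nonempty ∧ IsClosed M ∧ MapsTo shmap M M ∧
      ∀ z ∈ M, M ⊆ closure (range fun n : ℕ+ => shmap^[(n : ℕ)] z) := by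
  classical
  set S : Set (Set (ℕ → ℝ)) :=
    {K' | K' ⊆ K ∧ K'.Nonempty ∧ IsClosed K' ∧ MapsTo shmap K' K'} with hS
  have hKS : K ∈ S := ⟨Subset.rfl, hKne, hKcl, hKinv⟩
  have hzorn : ∀ c ⊆ S, IsChain (fun x1 x2 => x1 ⊆ x2) c → c.Nonempty →
      ∃ lb ∈ S, ∀ s ∈ c, lb ⊆ s := by
    intro c hcS hchain hcne
    refine ⟨⋂₀ c, ⟨?_, ?_, ?_, ?_⟩, fun s hs => sInter_subset_of_mem hs⟩
    · obtain ⟨s, hs⟩ := hcne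
      exact (sInter_subset_of_mem hs).trans (hcS hs).1
    · have : Nonempty c := hcne.to_subtype
      have hdir : Directed (fun x1 x2 => x1 ⊇ x2) (fun s : c => (s : Set (ℕ → ℝ))) := by
        rintro ⟨s, hs⟩ ⟨t, ht⟩
        rcases hchain.total hs ht with h | h
        · exact ⟨⟨s, hs⟩, Subset.rfl, h⟩
        · exact ⟨⟨t, ht⟩, h, Subset.rfl⟩
      have := IsCompact.nonempty_iInter_of_directed_nonempty_isCompact_isClosed
        (fun s : c => (s : Set (ℕ → ℝ))) hdir (fun s => (hcS s.2).2.1)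
        (fun s => hKcpt.of_isClosed_subset (hcS s.2).2.2.1 (hcS s.2).1)
        (fun s => (hcS s.2).2.2.1)
      rwa [sInter_eq_iInter]
    · exact isClosed_sInter fun s hs => (hcS hs).2.2.1
    · intro w hw
      rw [mem_sInter] at hw ⊢
      exact fun s hs => (hcS hs).2.2.2 (hw s hs)
  obtain ⟨M, -, hMmin⟩ := zorn_superset_nonempty S hzorn K hKS
  · obtain ⟨hMK, hMne, hMcl, hMinv⟩ := hMmin.prop
    refine ⟨M, hMK, hMne, hMcl, hMinv, fun z hz => ?_⟩
    set C := M ∩ closure (range fun n : ℕ+ => shmap^[(n : ℕ)] z) with hC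
    have hCS : C ∈ S := by
      refine ⟨(inter_subset_left).trans hMK, ⟨shmap z, hMinv hz, ?_⟩,
        hMcl.inter isClosed_closure, ?_⟩
      · apply subset_closure
        exact ⟨1, rfl⟩
      · rintro w ⟨hwM, hwc⟩
        refine ⟨hMinv hwM, ?_⟩
        have h1 : shmap w ∈ closure (shmap '' (range fun n : ℕ+ => shmap^[(n : ℕ)] z)) :=
          image_closure_subset_closure_image (f := shmap)
            (s := range fun n : ℕ+ => shmap^[(n : ℕ)] z) shmap_continuous ⟨w, hwc, rfl⟩
        refine closure_mono ?_ h1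
        rintro v ⟨u, ⟨n, rfl⟩, rfl⟩
        exact ⟨n + 1, by
          show shmap^[((n + 1 : ℕ+) : ℕ)] z = shmap (shmap^[(n : ℕ)] z)
          rw [PNat.add_coe, PNat.one_coe, Function.iterate_succ_apply']⟩
    have : M ⊆ C := hMmin.2 hCS inter_subset_left
    exact fun w hw => (this hw).2

/-- The machine: from a point with syndetic visits to a directed family of closed sets,
produce a minimal subsystem together with a point in the intersection of the family. -/
lemma machine (y : ℕ → ℝ) (hy : y ∈ cube) {ι : Type} [Nonempty ι] (V : ι → Set (ℕ → ℝ))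
    (hVc : ∀ i, IsClosed (V i)) (hdir : ∀ i j : ι, ∃ k, V k ⊆ V i ∧ V k ⊆ V j)
    (hsyn : ∀ i, ∃ N : ℕ, ∀ m : ℕ, ∃ k, m < k ∧ k ≤ m + N ∧ shmap^[k] y ∈ V i) :
    ∃ M, M ⊆ cube ∧ M.Nonempty ∧ IsClosed M ∧ MapsTo shmap M M ∧
      (∀ z ∈ M, M ⊆ closure (range fun n : ℕ+ => shmap^[(n : ℕ)] z)) ∧
      ∃ z ∈ M, ∀ i, z ∈ V i := by
  classical
  set X := closure (range fun n : ℕ => shmap^[n] y) with hX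
  have horb : (range fun n : ℕ => shmap^[n] y) ⊆ cube := by
    rintro w ⟨n, rfl⟩
    exact (shmap_mapsTo_cube.iterate n) hy
  have hXcube : X ⊆ cube := closure_minimal horb cube_closed
  have hXne : X.Nonempty := ⟨y, subset_closure ⟨0, rfl⟩⟩
  have hXcl : IsClosed X := isClosed_closure
  have hXcpt : IsCompact X := cube_compact.of_isClosed_subset hXcl hXcube
  have hXinv : MapsTo shmap X X := by
    intro w hw
    have h1 : shmap w ∈ closure (shmap '' range fun n : ℕ => shmap^[n] y) :=
      image_closure_subset_closure_image shmap_continuous ⟨w, hw, rfl⟩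
    refine closure_mono ?_ h1
    rintro v ⟨u, ⟨n, rfl⟩, rfl⟩
    exact ⟨n + 1, by
      show shmap^[n + 1] y = shmap (shmap^[n] y)
      rw [Function.iterate_succ_apply']⟩
  obtain ⟨M, hMX, hMne, hMcl, hMinv, hMmin⟩ :=
    exists_minimal_subsystem hXne hXcl hXcpt hXinv
  -- every point of X visits each V i within bounded time
  have hcover : ∀ i, ∀ w ∈ X, ∃ d : ℕ, 1 ≤ d ∧ shmap^[d] w ∈ V i := by
    intro i
    obtain ⟨N, hN⟩ := hsyn i
    have hsub : X ⊆ ⋃ d ∈ Finset.Icc 1 N, (shmap^[d]) ⁻¹' (V i) := by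
      apply closure_minimal
      · rintro w ⟨m, rfl⟩
        obtain ⟨k, hk1, hk2, hk3⟩ := hN m
        have : shmap^[k - m] (shmap^[m] y) ∈ V i := by
          rw [← Function.iterate_add_apply]
          have : k - m + m = k := by omega
          rw [this]; exact hk3
        refine mem_biUnion (Finset.mem_Icc.mpr (by omega)) this
      · apply Set.Finite.isClosed_biUnion (Finset.finite_toSet _)
        intro d _
        exact (hVc i).preimage (shmap_continuous.iterate d)
    intro w hw
    obtain ⟨d, hd, hdw⟩ := mem_iUnion₂.mp (hsub hw)
    simp only [Finset.mem_Icc] at hd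
    exact ⟨d, hd.1, hdw⟩
  have hMV : ∀ i, (M ∩ V i).Nonempty := by
    intro i
    obtain ⟨w, hw⟩ := hMne
    obtain ⟨d, _, hdw⟩ := hcover i w (hMX hw)
    exact ⟨shmap^[d] w, (hMinv.iterate d) hw, hdw⟩
  have hdir' : Directed (fun x1 x2 => x1 ⊇ x2) (fun i => M ∩ V i) := by
    intro i j
    obtain ⟨k, hki, hkj⟩ := hdir i j
    exact ⟨k, inter_subset_inter_right _ hki, inter_subset_inter_right _ hkj⟩
  have hMcpt : IsCompact M := hXcpt.of_isClosed_subset hMcl hMX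
  have hint := IsCompact.nonempty_iInter_of_directed_nonempty_isCompact_isClosed
    (fun i => M ∩ V i) hdir' hMV
    (fun i => hMcpt.of_isClosed_subset (hMcl.inter (hVc i)) inter_subset_left)
    (fun i => hMcl.inter (hVc i))
  obtain ⟨z, hz⟩ := hint
  rw [mem_iInter] at hz
  exact ⟨M, hMX.trans hXcube, hMne, hMcl, hMinv, hMmin,
    z, (hz (Classical.arbitrary ι)).1, fun i => (hz i).2⟩


/-- Package a minimal subsystem with a suitable point into a failure of pointwise recurrence. -/
lemma not_pointwiseRecurrent_of_witness (A : Set ℕ+) (M : Set (ℕ → ℝ))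
    (hMcube : M ⊆ cube) (hMne : M.Nonempty) (hMcl : IsClosed M) (hMinv : MapsTo shmap M M)
    (hMmin : ∀ z ∈ M, M ⊆ closure (range fun n : ℕ+ => shmap^[(n : ℕ)] z))
    (z : ℕ → ℝ) (hz : z ∈ M) (hz0 : z 0 = 1)
    (hzA : ∀ a : ℕ+, a ∈ A → z ((a : ℕ)) ≠ 1) : ¬ PointwiseRecurrent A := by
  intro hPR
  have hMcpt : IsCompact M := cube_compact.of_isClosed_subset hMcl hMcube
  haveI : CompactSpace M := isCompact_iff_compactSpace.mp hMcpt
  haveI : Nonempty M := hMne.to_subtype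
  set T : M → M := fun p => ⟨shmap p.1, hMinv p.2⟩ with hT
  have hTcont : Continuous T :=
    Continuous.subtype_mk (shmap_continuous.comp continuous_subtype_val) _
  have hTiter : ∀ (n : ℕ) (p : M), ((T^[n] p : M) : ℕ → ℝ) = shmap^[n] (p : ℕ → ℝ) := by
    intro n
    induction n with
    | zero => intro p; rfl
    | succ n ih =>
        intro p
        rw [Function.iterate_succ_apply, Function.iterate_succ_apply]
        exact ih (T p)
  have hmin : MinimalMap T := by
    intro p q
    rw [closure_subtype]
    have himg : (Subtype.val '' (range fun n : ℕ+ => T^[(n : ℕ)] p)) =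
        range fun n : ℕ+ => shmap^[(n : ℕ)] (p : ℕ → ℝ) := by
      ext w
      constructor
      · rintro ⟨u, ⟨n, rfl⟩, rfl⟩
        exact ⟨n, (hTiter _ _).symm⟩
      · rintro ⟨n, rfl⟩
        exact ⟨T^[(n : ℕ)] p, ⟨n, rfl⟩, hTiter _ _⟩
    rw [himg]
    exact hMmin (p : ℕ → ℝ) p.2 q.2
  set Sys : MinSystem := { X := M, T := T, cont := hTcont, minimal := hmin } with hSys
  set U : Set Sys.X := {p : M | 1/2 < (p : ℕ → ℝ) 0} with hU
  have hUopen : IsOpen U :=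
    isOpen_lt continuous_const ((continuous_apply 0).comp continuous_subtype_val)
  have hxU : (⟨z, hz⟩ : M) ∈ U := by
    show (1:ℝ)/2 < z 0
    rw [hz0]; norm_num
  obtain ⟨a, haA, haU⟩ := hPR Sys ⟨z, hz⟩ U hUopen hxU
  have h1 : ((Sys.T^[(a : ℕ)] ⟨z, hz⟩ : M) : ℕ → ℝ) 0 = z ((a : ℕ)) := by
    have := hTiter (a : ℕ) ⟨z, hz⟩
    rw [show Sys.T = T from rfl, this, shmap_iter_apply]
    norm_num
  have h2 : (1:ℝ)/2 < z ((a : ℕ)) := by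
    have := haU
    rw [hU, mem_setOf_eq, h1] at this
    exact this
  rcases hMcube hz ((a : ℕ)) with h0 | h1'
  · rw [h0] at h2; norm_num at h2
  · exact hzA a haA h1'

end Machine

section RetSyn
open Set Function

/-- In a minimal system, return times of any point to a nonempty open set are syndetic. -/
lemma retTimes_syndetic (S : MinSystem) (x : S.X) (U : Set S.X) (hU : IsOpen U)
    (hUne : U.Nonempty) : Syndetic (retTimes S.T x U) := by
  have hcover : (univ : Set S.X) ⊆ ⋃ n : ℕ+, (S.T^[(n : ℕ)]) ⁻¹' U := by
    intro y _
    obtain ⟨w, hwU, hwr⟩ := (S.minimal y).inter_open_nonempty U hU hUne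
    obtain ⟨n, rfl⟩ := hwr
    exact mem_iUnion.mpr ⟨n, hwU⟩
  obtain ⟨t, ht⟩ := isCompact_univ.elim_finite_subcover
    (fun n : ℕ+ => (S.T^[(n : ℕ)]) ⁻¹' U) (fun n => hU.preimage (S.cont.iterate _)) hcover
  rw [syndetic_unfold]
  refine ⟨t.sup id + 1, fun m => ?_⟩
  right
  obtain ⟨n, hnt, hny⟩ := mem_iUnion₂.mp (ht (mem_univ (S.T^[(m : ℕ)] x)))
  refine ⟨n, ?_, ?_⟩
  · calc n = id n := rfl
    _ ≤ t.sup id := Finset.le_sup hnt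
    _ ≤ t.sup id + 1 := by rw [← PNat.coe_le_coe]; simp
  · show S.T^[((m + n : ℕ+) : ℕ)] x ∈ U
    rw [PNat.add_coe, add_comm, Function.iterate_add_apply]
    exact hny

/-- direction (2) → (1). -/
lemma dir_two_one (A : Set ℕ+)
    (h2 : ∀ B : Set ℕ+, A ⊆ B →
      ∃ F : Finset ℕ+, (F : Set ℕ+) ⊆ Bᶜ ∧ Thick (B ∪ ⋃ f ∈ F, shiftN B f)) :
    PointwiseRecurrent A := by
  intro S x U hU hxU
  by_contra hno
  push_neg at hno
  set R := retTimes S.T x U with hR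
  have hAB : A ⊆ Rᶜ := fun a ha haR => hno a ha haR
  obtain ⟨F, hFsub, hThick⟩ := h2 Rᶜ hAB
  have hFR : (F : Set ℕ+) ⊆ R := by
    intro f hf
    have := hFsub hf
    rwa [compl_compl] at this
  set V : Set S.X := U ∩ ⋂ f ∈ F, (S.T^[((f : ℕ+) : ℕ)]) ⁻¹' U with hV
  have hVopen : IsOpen V :=
    hU.inter (isOpen_biInter_finset fun f _ => hU.preimage (S.cont.iterate _))
  have hxV : x ∈ V := by
    refine ⟨hxU, mem_iInter₂.mpr fun f hf => ?_⟩
    exact hFR hf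
  have hsynV := retTimes_syndetic S x V hVopen ⟨x, hxV⟩
  have hsub : retTimes S.T x V ⊆ (Rᶜ ∪ ⋃ f ∈ F, shiftN Rᶜ f)ᶜ := by
    intro n hn
    have hnU : S.T^[(n : ℕ)] x ∈ U := hn.1
    have hnI : ∀ f ∈ F, S.T^[((f : ℕ+) : ℕ)] (S.T^[(n : ℕ)] x) ∈ U := by
      intro f hf
      exact mem_iInter₂.mp hn.2 f hf
    intro hmem
    rcases hmem with h | h
    · exact h hnU
    · obtain ⟨f, hfF, hshift⟩ := mem_iUnion₂.mp h
      apply hshift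
      show S.T^[((n + f : ℕ+) : ℕ)] x ∈ U
      rw [PNat.add_coe, add_comm, Function.iterate_add_apply]
      exact hnI f hfF
  exact not_thick_of_syndetic_compl (hsynV.mono hsub) hThick

/-- direction (3) → (1). -/
lemma dir_three_one (A : Set ℕ+)
    (h3 : ∀ S : Set ℕ+, Syndetic S →
      ∃ F : Finset ℕ+, (F : Set ℕ+) ⊆ A ∧
        ∀ S' : Set ℕ+, S' ⊆ S → Syndetic S' →
          ((F : Set ℕ+) ∩ shiftSet S S').Nonempty) :
    PointwiseRecurrent A := by
  intro Sys x U hU hxU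
  obtain ⟨r, hr, hball⟩ := Metric.isOpen_iff.mp hU x hxU
  set U' := Metric.ball x (r / 2) with hU'
  have hU'U : closure U' ⊆ U := by
    refine (Metric.closure_ball_subset_closedBall).trans ?_
    refine (Metric.closedBall_subset_ball ?_).trans hball
    linarith
  have hxU' : x ∈ U' := Metric.mem_ball_self (by linarith)
  set S0 := retTimes Sys.T x U' with hS0
  have hS0syn := retTimes_syndetic Sys x U' Metric.isOpen_ball ⟨x, hxU'⟩
  obtain ⟨F, hFA, hFprop⟩ := h3 S0 hS0syn
  by_contra hno
  push_neg at hno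
  set W : Set Sys.X := U' ∩ ⋂ f ∈ F, (Sys.T^[((f : ℕ+) : ℕ)]) ⁻¹' (closure U')ᶜ with hW
  have hWopen : IsOpen W :=
    Metric.isOpen_ball.inter (isOpen_biInter_finset fun f _ =>
      (isClosed_closure.isOpen_compl).preimage (Sys.cont.iterate _))
  have hxW : x ∈ W := by
    refine ⟨hxU', mem_iInter₂.mpr fun f hf => ?_⟩
    intro hmem
    exact hno f (hFA hf) (hU'U hmem)
  have hS'syn := retTimes_syndetic Sys x W hWopen ⟨x, hxW⟩
  have hS'sub : retTimes Sys.T x W ⊆ S0 := fun n hn => hn.1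
  obtain ⟨f, hfF, hfshift⟩ := hFprop _ hS'sub hS'syn
  obtain ⟨b, hb, hfb⟩ : ∃ b ∈ retTimes Sys.T x W, f + b ∈ S0 := by
    rcases mem_iUnion₂.mp hfshift with ⟨b, hbmem, hfb⟩
    exact ⟨b, hbmem, hfb⟩
  have h1 : Sys.T^[((f + b : ℕ+) : ℕ)] x ∈ U' := hfb
  have h2 : Sys.T^[((f : ℕ+) : ℕ)] (Sys.T^[((b : ℕ+) : ℕ)] x) ∈ (closure U')ᶜ :=
    mem_iInter₂.mp hb.2 f hfF
  apply h2
  apply subset_closure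
  rwa [PNat.add_coe, Function.iterate_add_apply] at h1
  
end RetSyn


section CoreConstruction
open Set Classical

attribute [local instance] Classical.propDecidable

/-- least element `> a` of `{t | t + Q ⊆ C}` (junk value if none). -/
noncomputable def hitf (C : Set ℕ) (Q : Finset ℕ) (a : ℕ) : ℕ :=
  if h : ∃ t, a < t ∧ ∀ q ∈ Q, t + q ∈ C then Nat.find h else a + 1

lemma hitf_spec {C : Set ℕ} {N : ℕ} {Q : Finset ℕ}
    (hQ : ∀ m : ℕ, ∃ t, m < t ∧ t ≤ m + N ∧ ∀ q ∈ Q, t + q ∈ C) (a : ℕ) :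
    a < hitf C Q a ∧ hitf C Q a ≤ a + N ∧ ∀ q ∈ Q, hitf C Q a + q ∈ C := by
  obtain ⟨t, h1, h2, h3⟩ := hQ a
  have hex : ∃ t, a < t ∧ ∀ q ∈ Q, t + q ∈ C := ⟨t, h1, h3⟩
  rw [hitf, dif_pos hex]
  obtain ⟨g1, g2⟩ := Nat.find_spec hex
  exact ⟨g1, le_trans (Nat.find_le ⟨h1, h3⟩) h2, g2⟩

/-- cleanliness: `r ∈ T` and every element of `T` in the window `(r, r+lj]`
sits at a `C`-distance from `r`. -/
def CleanIn (C : Set ℕ) (T : Finset ℕ) (lj r : ℕ) : Prop :=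
  r ∈ T ∧ ∀ u ∈ T, r < u → u ≤ r + lj → u - r ∈ C

variable (C : Set ℕ) (Nf : Finset ℕ → ℕ) (pv : ℕ → Finset ℕ × ℕ)

/-- footprint `Λ i`. -/
def lilam (i : ℕ) : ℕ := Nf (pv i).1 + (pv i).2 + 2

/-- `Λ' j = max_{i ≤ j} Λ i`. -/
def bigL : ℕ → ℕ
  | 0 => lilam Nf pv 0
  | j + 1 => max (bigL j) (lilam Nf pv (j + 1))

/-- `Ξ j = Σ_{i ≤ j} Λ i`. -/
def Xi : ℕ → ℕ
  | 0 => lilam Nf pv 0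
  | j + 1 => Xi j + lilam Nf pv (j + 1)

/-- tail constant. -/
def Tt (j : ℕ) : ℕ := Xi Nf pv j + (pv j).2 + 2

/-- clean-gap constant. -/
def Uu (j : ℕ) : ℕ := (pv j).2 + Xi Nf pv j + 2 * bigL Nf pv j + 16

lemma lilam_le_bigL {k j : ℕ} (h : k ≤ j) : lilam Nf pv k ≤ bigL Nf pv j := by
  induction j with
  | zero => simp_all [bigL]
  | succ j ih =>
      rcases Nat.lt_or_ge k (j + 1) with h' | h'
      · exact le_trans (ih (by omega)) (le_max_left _ _)
      · have : k = j + 1 := by omega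
        subst this
        exact le_max_right _ _

lemma bigL_le_Xi (j : ℕ) : bigL Nf pv j ≤ Xi Nf pv j := by
  induction j with
  | zero => simp [bigL, Xi]
  | succ j ih =>
      rw [bigL, Xi]
      rcases max_cases (bigL Nf pv j) (lilam Nf pv (j+1)) with ⟨h1, _⟩ | ⟨h1, _⟩ <;> omega

lemma Xi_mono {k j : ℕ} (h : k ≤ j) : Xi Nf pv k ≤ Xi Nf pv j := by
  induction j with
  | zero => simp_all
  | succ j ih =>
      rcases Nat.lt_or_ge k (j + 1) with h' | h'
      · have := ih (by omega)
        rw [Xi]; omega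
      · have : k = j + 1 := by omega
        subst this; rfl

lemma bigL_mono {k j : ℕ} (h : k ≤ j) : bigL Nf pv k ≤ bigL Nf pv j := by
  induction j with
  | zero => simp_all
  | succ j ih =>
      rcases Nat.lt_or_ge k (j + 1) with h' | h'
      · exact le_trans (ih (by omega)) (le_max_left _ _)
      · have : k = j + 1 := by omega
        subst this; rfl

/-- congruence for the constants under agreement of `pv` below `j`. -/
lemma lilam_congr {pv' : ℕ → Finset ℕ × ℕ} {j : ℕ} (h : pv j = pv' j) :
    lilam Nf pv j = lilam Nf pv' j := by rw [lilam, lilam, h]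

lemma bigL_congr {pv' : ℕ → Finset ℕ × ℕ} {j : ℕ} (h : ∀ i ≤ j, pv i = pv' i) :
    bigL Nf pv j = bigL Nf pv' j := by
  induction j with
  | zero => rw [bigL, bigL, lilam_congr Nf pv (h 0 le_rfl)]
  | succ j ih =>
      rw [bigL, bigL, ih (fun i hi => h i (by omega)), lilam_congr Nf pv (h (j+1) le_rfl)]

lemma Xi_congr {pv' : ℕ → Finset ℕ × ℕ} {j : ℕ} (h : ∀ i ≤ j, pv i = pv' i) :
    Xi Nf pv j = Xi Nf pv' j := by
  induction j with
  | zero => rw [Xi, Xi, lilam_congr Nf pv (h 0 le_rfl)]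
  | succ j ih =>
      rw [Xi, Xi, ih (fun i hi => h i (by omega)), lilam_congr Nf pv (h (j+1) le_rfl)]

lemma Tt_congr {pv' : ℕ → Finset ℕ × ℕ} {j : ℕ} (h : ∀ i ≤ j, pv i = pv' i) :
    Tt Nf pv j = Tt Nf pv' j := by
  rw [Tt, Tt, Xi_congr Nf pv h, h j le_rfl]

lemma Uu_congr {pv' : ℕ → Finset ℕ × ℕ} {j : ℕ} (h : ∀ i ≤ j, pv i = pv' i) :
    Uu Nf pv j = Uu Nf pv' j := by
  rw [Uu, Uu, Xi_congr Nf pv h, bigL_congr Nf pv h, h j le_rfl]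

/-- the level chosen by the fill. -/
noncomputable def pick (a b cap : ℕ) : ℕ :=
  Nat.findGreatest (fun i => a + Nf (pv i).1 + (pv i).2 + 1 < b) cap

/-- the recursive fill of an interval `(a,b)` by blocks of levels `≤ cap`. -/
noncomputable def fillC : ℕ → ℕ → ℕ → ℕ → Finset ℕ
  | 0, _, _, _ => ∅
  | fuel + 1, a, b, cap =>
      if _h : ∃ i, i ≤ cap ∧ a + Nf (pv i).1 + (pv i).2 + 1 < b then
        if _ht : a < hitf C (pv (pick Nf pv a b cap)).1 a ∧
            hitf C (pv (pick Nf pv a b cap)).1 a + (pv (pick Nf pv a b cap)).2 + 1 ≤ b then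
          fillC fuel a (hitf C (pv (pick Nf pv a b cap)).1 a) cap ∪
            (pv (pick Nf pv a b cap)).1.image (· + hitf C (pv (pick Nf pv a b cap)).1 a) ∪
            fillC fuel (hitf C (pv (pick Nf pv a b cap)).1 a + (pv (pick Nf pv a b cap)).2) b cap
        else ∅
      else ∅

/-- the descending pack: one block of each level `i, i-1, …, 0`, with recursively filled
gaps; returns the content together with the end position. -/
noncomputable def packC : ℕ → ℕ → Finset ℕ × ℕ
  | 0, pos =>
      (fillC C Nf pv (hitf C (pv 0).1 pos - pos) pos (hitf C (pv 0).1 pos) 0 ∪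
        (pv 0).1.image (· + hitf C (pv 0).1 pos), hitf C (pv 0).1 pos + (pv 0).2)
  | i + 1, pos =>
      (fillC C Nf pv (hitf C (pv (i + 1)).1 pos - pos) pos (hitf C (pv (i + 1)).1 pos) (i + 1) ∪
        (pv (i + 1)).1.image (· + hitf C (pv (i + 1)).1 pos) ∪
        (packC i (hitf C (pv (i + 1)).1 pos + (pv (i + 1)).2)).1,
        (packC i (hitf C (pv (i + 1)).1 pos + (pv (i + 1)).2)).2)

/-- the tower of stages: `stages g i` is the pattern/length data of level `i`
as known at stage `g`. -/
noncomputable def stages : ℕ → ℕ → Finset ℕ × ℕ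
  | 0 => fun _ => ({0}, 1)
  | g + 1 => fun i =>
      if i ≤ g then stages g i
      else
        let pv' := stages g
        let pk := packC C Nf pv' g (pv' g).2
        ((pv' g).1 ∪ pk.1, pk.2)

lemma stages_stable : ∀ g i, i ≤ g → stages C Nf (g + 1) i = stages C Nf g i := by
  intro g i h
  rw [stages]
  simp [h]

lemma stages_stable' : ∀ g g' i, i ≤ g → g ≤ g' → stages C Nf g' i = stages C Nf g i := by
  intro g g' i h hg
  induction g' with
  | zero => have : g = 0 := by omega
            subst this; rfl
  | succ g' ih =>
      rcases Nat.lt_or_ge g' g with h' | h'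
      · have : g = g' + 1 := by omega
        subst this; rfl
      · rw [stages_stable C Nf g' i (by omega)]
        exact ih h'

end CoreConstruction

section CoreMain
open Set Classical

attribute [local instance] Classical.propDecidable

/-- The hypotheses on levels `≤ cap`. -/
structure LG (C : Set ℕ) (Nf : Finset ℕ → ℕ) (pv : ℕ → Finset ℕ × ℕ) (cap : ℕ) : Prop where
  hitp : ∀ i ≤ cap, ∀ a : ℕ, a < hitf C (pv i).1 a ∧ hitf C (pv i).1 a ≤ a + Nf (pv i).1 ∧
           ∀ q ∈ (pv i).1, hitf C (pv i).1 a + q ∈ C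
  zero_mem : ∀ i ≤ cap, 0 ∈ (pv i).1
  subC : ∀ i ≤ cap, ∀ x ∈ (pv i).1, x ∈ C ∨ x = 0
  bdd : ∀ i ≤ cap, ∀ x ∈ (pv i).1, x ≤ (pv i).2
  posl : ∀ i ≤ cap, 1 ≤ (pv i).2
  mono : ∀ i ≤ cap, ∀ k, k ≤ i → (pv k).2 ≤ (pv i).2
  interior : ∀ i ≤ cap, ∀ j, j < i → ∀ x, x + Uu Nf pv j ≤ (pv i).2 →
     ∃ r, x ≤ r ∧ r ≤ x + Uu Nf pv j ∧ r + (pv j).2 ≤ (pv i).2 ∧ CleanIn C (pv i).1 (pv j).2 r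
  tail : ∀ i ≤ cap, ∀ j, j < i → ∃ r, (pv i).2 ≤ r + Tt Nf pv j ∧ r + (pv j).2 ≤ (pv i).2 ∧
     CleanIn C (pv i).1 (pv j).2 r

variable {C : Set ℕ} {Nf : Finset ℕ → ℕ} {pv : ℕ → Finset ℕ × ℕ}

lemma lilam_le_Uu (j : ℕ) : lilam Nf pv j ≤ Uu Nf pv j := by
  have h1 := lilam_le_bigL Nf pv (le_refl j)
  rw [Uu]
  omega

lemma Tt_add_bigL_le_Uu (j : ℕ) : Tt Nf pv j + bigL Nf pv j + 2 ≤ Uu Nf pv j := by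
  rw [Uu, Tt]
  omega

lemma lam_le_Uu (j : ℕ) : (pv j).2 + 16 ≤ Uu Nf pv j := by
  rw [Uu]; omega

lemma lam_lt_Tt (j : ℕ) : (pv j).2 + 2 ≤ Tt Nf pv j := by
  rw [Tt]; omega

/-- main fill lemma. -/
theorem fill_main {cap : ℕ} (hlg : LG C Nf pv cap) :
    ∀ fuel a b, b - a ≤ fuel →
      (∀ u ∈ fillC C Nf pv fuel a b cap, (a < u ∧ u + 1 ≤ b) ∧ u ∈ C) ∧
      (∀ j ≤ cap, ∀ x, a ≤ x → x + Uu Nf pv j < b →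
        ∃ r, x ≤ r ∧ r ≤ x + Uu Nf pv j ∧ r + (pv j).2 < b ∧
          CleanIn C (fillC C Nf pv fuel a b cap) (pv j).2 r) ∧
      (∀ j ≤ cap, a + Nf (pv j).1 + (pv j).2 + 1 < b →
        ∃ r, a < r ∧ r ≤ a + bigL Nf pv j ∧ r + (pv j).2 < b ∧
          CleanIn C (fillC C Nf pv fuel a b cap) (pv j).2 r) := by
  intro fuel
  induction fuel with
  | zero =>
      intro a b hab
      refine ⟨by simp [fillC], ?_, ?_⟩
      · intro j hj x hax hxb
        exfalso
        have := lam_le_Uu (Nf := Nf) (pv := pv) j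
        omega
      · intro j hj hfeas
        exfalso
        omega
  | succ fuel ih =>
      intro a b hab
      by_cases hguard : ∃ i, i ≤ cap ∧ a + Nf (pv i).1 + (pv i).2 + 1 < b
      · -- main case
        set i := pick Nf pv a b cap with hi
        set t := hitf C (pv i).1 a with ht
        obtain ⟨i0, hi0cap, hi0⟩ := hguard
        have hguard' : ∃ i, i ≤ cap ∧ a + Nf (pv i).1 + (pv i).2 + 1 < b := ⟨i0, hi0cap, hi0⟩
        have hiP : a + Nf (pv i).1 + (pv i).2 + 1 < b := by
          rw [hi, pick]
          exact Nat.findGreatest_spec (P := fun i => a + Nf (pv i).1 + (pv i).2 + 1 < b) hi0cap hi0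
        have hicap : i ≤ cap := by rw [hi, pick]; exact Nat.findGreatest_le cap
        have hge : ∀ k ≤ cap, a + Nf (pv k).1 + (pv k).2 + 1 < b → k ≤ i := by
          intro k hk hP
          rw [hi, pick]
          exact Nat.le_findGreatest (P := fun i => a + Nf (pv i).1 + (pv i).2 + 1 < b) hk hP
        obtain ⟨ht1, ht2, ht3⟩ := hlg.hitp i hicap a
        rw [← ht] at ht1 ht2 ht3
        have hib : t + (pv i).2 + 1 ≤ b := by omega
        have hht : a < t ∧ t + (pv i).2 + 1 ≤ b := ⟨ht1, hib⟩
        have hunf : fillC C Nf pv (fuel + 1) a b cap =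
            fillC C Nf pv fuel a t cap ∪ (pv i).1.image (· + t) ∪
              fillC C Nf pv fuel (t + (pv i).2) b cap := by
          rw [fillC, dif_pos hguard', dif_pos (by rw [← hi, ← ht]; exact hht)]
        have hlami : 1 ≤ (pv i).2 := hlg.posl i hicap
        have hFfuel : t - a ≤ fuel := by omega
        have hRfuel : b - (t + (pv i).2) ≤ fuel := by omega
        obtain ⟨f1F, f3F, f4F⟩ := ih a t hFfuel
        obtain ⟨f1R, f3R, f4R⟩ := ih (t + (pv i).2) b hRfuel
        set F := fillC C Nf pv fuel a t cap with hF
        set R := fillC C Nf pv fuel (t + (pv i).2) b cap with hR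
        set D := F ∪ (pv i).1.image (· + t) ∪ R with hD
        rw [hunf]
        -- membership in D
        have hmemD : ∀ u, u ∈ D ↔ u ∈ F ∨ (∃ s ∈ (pv i).1, s + t = u) ∨ u ∈ R := by
          intro u
          simp [hD, Finset.mem_union, Finset.mem_image, or_assoc]
        -- basic bounds
        have hf1 : ∀ u ∈ D, (a < u ∧ u + 1 ≤ b) ∧ u ∈ C := by
          intro u hu
          rcases (hmemD u).mp hu with h | ⟨s, hs, rfl⟩ | h
          · have := f1F u h
            exact ⟨⟨this.1.1, by omega⟩, this.2⟩
          · have hsb := hlg.bdd i hicap s hs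
            constructor
            · constructor
              · omega
              · omega
            · have := ht3 s hs
              rwa [add_comm] at this
          · have := f1R u h
            exact ⟨⟨by omega, this.1.2⟩, this.2⟩
        -- t belongs to D
        have htD : t ∈ D := by
          rw [hmemD]
          exact Or.inr (Or.inl ⟨0, hlg.zero_mem i hicap, by omega⟩)
        -- isolation of the block at t
        have hIso : ∀ u ∈ D, t < u → u ≤ t + (pv i).2 → u - t ∈ (pv i).1 := by
          intro u hu h1 h2
          rcases (hmemD u).mp hu with h | ⟨s, hs, rfl⟩ | h
          · have := f1F u h
            omega
          · have : s + t - t = s := by omega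
            rwa [this]
          · have := f1R u h
            omega
        -- the block start is clean for every level ≤ i
        have hcleant : ∀ j ≤ i, CleanIn C D (pv j).2 t := by
          intro j hj
          refine ⟨htD, fun u hu h1 h2 => ?_⟩
          have hmono := hlg.mono i hicap j hj
          have hmem := hIso u hu h1 (by omega)
          rcases hlg.subC i hicap _ hmem with h | h
          · exact h
          · omega
        -- lifting clean sets from F
        have hliftF : ∀ lj r, r + lj < t → CleanIn C F lj r → CleanIn C D lj r := by
          rintro lj r hrt ⟨hrm, hcl⟩
          refine ⟨(hmemD r).mpr (Or.inl hrm), fun u hu h1 h2 => ?_⟩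
          rcases (hmemD u).mp hu with h | ⟨s, hs, rfl⟩ | h
          · exact hcl u h h1 h2
          · omega
          · have := f1R u h
            omega
        -- lifting clean sets from R
        have hliftR : ∀ lj r, t + (pv i).2 < r → CleanIn C R lj r → CleanIn C D lj r := by
          rintro lj r hrt ⟨hrm, hcl⟩
          refine ⟨(hmemD r).mpr (Or.inr (Or.inr hrm)), fun u hu h1 h2 => ?_⟩
          rcases (hmemD u).mp hu with h | ⟨s, hs, rfl⟩ | h
          · have := f1F u h
            omega
          · have hsb := hlg.bdd i hicap s hs
            omega
          · exact hcl u h h1 h2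
        -- lifting interior cleans of the pattern
        have hliftI : ∀ j, j ≤ cap → ∀ r', r' + (pv j).2 ≤ (pv i).2 →
            CleanIn C (pv i).1 (pv j).2 r' → CleanIn C D (pv j).2 (t + r') := by
          rintro j hjcap r' hr' ⟨hrm, hcl⟩
          refine ⟨(hmemD _).mpr (Or.inr (Or.inl ⟨r', hrm, by omega⟩)), fun u hu h1 h2 => ?_⟩
          have hu2 : u ≤ t + (pv i).2 := by omega
          have hmem := hIso u hu (by omega) hu2
          have := hcl (u - t) hmem (by omega) (by omega)
          have heq : u - t - r' = u - (t + r') := by omega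
          rwa [heq] at this
        refine ⟨hf1, ?_, ?_⟩
        · -- f3
          intro j hjcap x hax hxb
          have hUj := lam_le_Uu (Nf := Nf) (pv := pv) j
          have hLj := lilam_le_Uu (Nf := Nf) (pv := pv) j
          have hTU := Tt_add_bigL_le_Uu (Nf := Nf) (pv := pv) j
          have hTj := lam_lt_Tt (Nf := Nf) (pv := pv) j
          have hlilam : lilam Nf pv j = Nf (pv j).1 + (pv j).2 + 2 := rfl
          have hLbigj : lilam Nf pv j ≤ bigL Nf pv j := lilam_le_bigL Nf pv (le_refl j)
          have hjfeas : a + Nf (pv j).1 + (pv j).2 + 1 < b := by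
            have : lilam Nf pv j = Nf (pv j).1 + (pv j).2 + 2 := rfl
            omega
          have hji : j ≤ i := hge j hjcap hjfeas
          have hmono := hlg.mono i hicap j hji
          rcases Nat.lt_or_ge (x + Uu Nf pv j) t with hc1 | hc1
          · -- C1 : window entirely inside the front
            obtain ⟨r, hr1, hr2, hr3, hr4⟩ := f3F j hjcap x hax hc1
            exact ⟨r, hr1, hr2, by omega, hliftF _ r (by omega) hr4⟩
          rcases le_or_gt x t with hc2 | hc2
          · -- C2 : the block start is inside the window
            exact ⟨t, hc2, by omega, by omega, hcleant j hji⟩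
          -- now t < x
          rcases le_or_gt (t + (pv i).2) x with hc5 | hc5
          · -- rear case: window entirely inside the rear region
            obtain ⟨r, hr1, hr2, hr3, hr4⟩ := f3R j hjcap x hc5 hxb
            refine ⟨r, hr1, hr2, hr3, hliftR _ r ?_ hr4⟩
            have := f1R r hr4.1
            omega
          rcases le_or_gt (x + Uu Nf pv j) (t + (pv i).2) with hc3 | hc3
          · -- C3 : window inside the block: use interior cleans of the pattern
            have hij : j < i := by
              rcases Nat.lt_or_ge j i with h | h
              · exact h
              · exfalso
                have : j = i := by omega
                subst this
                omega
            obtain ⟨r', hr1, hr2, hr3, hr4⟩ :=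
              hlg.interior i hicap j hij (x - t) (by omega)
            refine ⟨t + r', by omega, by omega, by omega, hliftI j hjcap r' hr3 hr4⟩
          · -- C4 : window straddles the end of the block
            rcases le_or_gt (x + Tt Nf pv j) (t + (pv i).2) with hc4 | hc4
            · -- C4a : use the tail cleans of the pattern
              have hij : j < i := by
                rcases Nat.lt_or_ge j i with h | h
                · exact h
                · exfalso
                  have : j = i := by omega
                  subst this
                  omega
              obtain ⟨r', hr1, hr2, hr3⟩ := hlg.tail i hicap j hij
              refine ⟨t + r', by omega, by omega, by omega, hliftI j hjcap r' hr2 hr3⟩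
            · -- C4b : use the front cleans of the rear region
              obtain ⟨r, hr1, hr2, hr3, hr4⟩ := f4R j hjcap (by omega)
              have hbig : bigL Nf pv j ≤ Uu Nf pv j := by
                have := Tt_add_bigL_le_Uu (Nf := Nf) (pv := pv) j
                omega
              refine ⟨r, by omega, by omega, hr3, hliftR _ r hr1 hr4⟩
        · -- f4
          intro j hjcap hjfeas
          have hji : j ≤ i := hge j hjcap hjfeas
          have hmono := hlg.mono i hicap j hji
          have hLb := lilam_le_bigL Nf pv hji
          have hLb' := lilam_le_bigL Nf pv (le_refl j)
          rcases le_or_gt t (a + bigL Nf pv j) with hc | hc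
          · exact ⟨t, ht1, hc, by omega, hcleant j hji⟩
          · have hfeasF : a + Nf (pv j).1 + (pv j).2 + 1 < t := by
              have : lilam Nf pv j = Nf (pv j).1 + (pv j).2 + 2 := rfl
              omega
            obtain ⟨r, hr1, hr2, hr3, hr4⟩ := f4F j hjcap hfeasF
            exact ⟨r, hr1, hr2, by omega, hliftF _ r (by omega) hr4⟩
      · -- guard fails : the fill is empty, and the hypotheses of f3/f4 are contradictory
        have hunf : fillC C Nf pv (fuel + 1) a b cap = ∅ := by
          rw [fillC, dif_neg hguard]
        rw [hunf]
        refine ⟨by simp, ?_, ?_⟩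
        · intro j hj x hax hxb
          exfalso
          apply hguard
          refine ⟨j, hj, ?_⟩
          have : lilam Nf pv j = Nf (pv j).1 + (pv j).2 + 2 := rfl
          have := lilam_le_Uu (Nf := Nf) (pv := pv) j
          omega
        · intro j hj hfeas
          exact absurd ⟨j, hj, hfeas⟩ hguard

end CoreMain

section CorePack
open Set Classical

attribute [local instance] Classical.propDecidable

variable {C : Set ℕ} {Nf : Finset ℕ → ℕ} {pv : ℕ → Finset ℕ × ℕ}

lemma LG.down {cap : ℕ} (h : LG C Nf pv cap) {cap' : ℕ} (hc : cap' ≤ cap) :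
    LG C Nf pv cap' :=
  ⟨fun i hi => h.hitp i (le_trans hi hc), fun i hi => h.zero_mem i (le_trans hi hc),
   fun i hi => h.subC i (le_trans hi hc), fun i hi => h.bdd i (le_trans hi hc),
   fun i hi => h.posl i (le_trans hi hc), fun i hi => h.mono i (le_trans hi hc),
   fun i hi => h.interior i (le_trans hi hc), fun i hi => h.tail i (le_trans hi hc)⟩

/-- main pack lemma. -/
theorem pack_main {cap : ℕ} (hlg : LG C Nf pv cap) :
    ∀ i, i ≤ cap → ∀ pos,
      (pos < (packC C Nf pv i pos).2 ∧ (packC C Nf pv i pos).2 ≤ pos + Xi Nf pv i) ∧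
      (∀ u ∈ (packC C Nf pv i pos).1, (pos < u ∧ u ≤ (packC C Nf pv i pos).2) ∧ u ∈ C) ∧
      (∀ j ≤ i, ∀ x, pos ≤ x → x + Uu Nf pv j ≤ (packC C Nf pv i pos).2 →
        ∃ r, x ≤ r ∧ r ≤ x + Uu Nf pv j ∧ r + (pv j).2 ≤ (packC C Nf pv i pos).2 ∧
          CleanIn C (packC C Nf pv i pos).1 (pv j).2 r) ∧
      (∀ j ≤ i, ∃ r, (packC C Nf pv i pos).2 ≤ r + Tt Nf pv j ∧
          r + (pv j).2 ≤ (packC C Nf pv i pos).2 ∧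
          CleanIn C (packC C Nf pv i pos).1 (pv j).2 r) ∧
      (∀ j ≤ i, ∃ r, pos < r ∧ r ≤ pos + bigL Nf pv j ∧
          r + (pv j).2 ≤ (packC C Nf pv i pos).2 ∧
          CleanIn C (packC C Nf pv i pos).1 (pv j).2 r) := by
  intro i
  induction i with
  | zero =>
      intro hcap pos
      set t := hitf C (pv 0).1 pos with htdef
      obtain ⟨ht1, ht2, ht3⟩ := hlg.hitp 0 hcap pos
      rw [← htdef] at ht1 ht2 ht3
      have hlam0 : 1 ≤ (pv 0).2 := hlg.posl 0 hcap
      have hPeq : packC C Nf pv 0 pos =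
          (fillC C Nf pv (t - pos) pos t 0 ∪ (pv 0).1.image (· + t), t + (pv 0).2) := by
        rw [packC, ← htdef]
      obtain ⟨f1F, f3F, f4F⟩ := fill_main (hlg.down (Nat.zero_le cap)) (t - pos) pos t le_rfl
      set F := fillC C Nf pv (t - pos) pos t 0 with hFdef
      rw [hPeq]
      set P := F ∪ (pv 0).1.image (· + t) with hPdef
      have hmemP : ∀ u, u ∈ P ↔ u ∈ F ∨ (∃ s ∈ (pv 0).1, s + t = u) := by
        intro u
        simp [hPdef, Finset.mem_union, Finset.mem_image]
      have hlilam0 : lilam Nf pv 0 = Nf (pv 0).1 + (pv 0).2 + 2 := rfl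
      have hXi0 : Xi Nf pv 0 = lilam Nf pv 0 := rfl
      have hbigL0 : bigL Nf pv 0 = lilam Nf pv 0 := rfl
      have hp1 : ∀ u ∈ P, (pos < u ∧ u ≤ t + (pv 0).2) ∧ u ∈ C := by
        intro u hu
        rcases (hmemP u).mp hu with h | ⟨s, hs, rfl⟩
        · have := f1F u h
          exact ⟨⟨this.1.1, by omega⟩, this.2⟩
        · have hsb := hlg.bdd 0 hcap s hs
          refine ⟨⟨by omega, by omega⟩, ?_⟩
          have := ht3 s hs
          rwa [add_comm] at this
      have htP : t ∈ P := (hmemP t).mpr (Or.inr ⟨0, hlg.zero_mem 0 hcap, by omega⟩)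
      have hcleant : CleanIn C P (pv 0).2 t := by
        refine ⟨htP, fun u hu h1 h2 => ?_⟩
        rcases (hmemP u).mp hu with h | ⟨s, hs, rfl⟩
        · have := f1F u h
          omega
        · have : s + t - t = s := by omega
          rw [this]
          rcases hlg.subC 0 hcap s hs with h | h
          · exact h
          · omega
      refine ⟨⟨by omega, by omega⟩, hp1, ?_, ?_, ?_⟩
      · -- p3
        intro j hj x hx hxU
        interval_cases j
        have hU0 := lam_le_Uu (Nf := Nf) (pv := pv) 0
        rcases Nat.lt_or_ge (x + Uu Nf pv 0) t with hc1 | hc1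
        · obtain ⟨r, hr1, hr2, hr3, hr4⟩ := f3F 0 le_rfl x hx hc1
          refine ⟨r, hr1, hr2, by omega, ?_⟩
          obtain ⟨hrm, hcl⟩ := hr4
          refine ⟨(hmemP r).mpr (Or.inl hrm), fun u hu h1 h2 => ?_⟩
          rcases (hmemP u).mp hu with h | ⟨s, hs, rfl⟩
          · exact hcl u h h1 h2
          · omega
        · rcases le_or_gt x t with hc2 | hc2
          · exact ⟨t, hc2, by omega, by omega, hcleant⟩
          · exfalso
            omega
      · -- p4
        intro j hj
        interval_cases j
        have hT0 := lam_lt_Tt (Nf := Nf) (pv := pv) 0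
        exact ⟨t, by omega, by omega, hcleant⟩
      · -- p5
        intro j hj
        interval_cases j
        rcases le_or_gt t (pos + bigL Nf pv 0) with hc | hc
        · exact ⟨t, ht1, hc, by omega, hcleant⟩
        · have hfeas : pos + Nf (pv 0).1 + (pv 0).2 + 1 < t := by omega
          obtain ⟨r, hr1, hr2, hr3, hr4⟩ := f4F 0 le_rfl hfeas
          refine ⟨r, hr1, hr2, by omega, ?_⟩
          obtain ⟨hrm, hcl⟩ := hr4
          refine ⟨(hmemP r).mpr (Or.inl hrm), fun u hu h1 h2 => ?_⟩
          rcases (hmemP u).mp hu with h | ⟨s, hs, rfl⟩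
          · exact hcl u h h1 h2
          · omega
  | succ i ih =>
      intro hcap pos
      have hicap : i ≤ cap := by omega
      set t := hitf C (pv (i + 1)).1 pos with htdef
      obtain ⟨ht1, ht2, ht3⟩ := hlg.hitp (i + 1) hcap pos
      rw [← htdef] at ht1 ht2 ht3
      have hlami : 1 ≤ (pv (i + 1)).2 := hlg.posl (i + 1) hcap
      set e := t + (pv (i + 1)).2 with hedef
      obtain ⟨⟨q01, q02⟩, q1, q3, q4, q5⟩ := ih hicap e
      set E := (packC C Nf pv i e).2 with hEdef
      set RP := (packC C Nf pv i e).1 with hRPdef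
      have hPeq : packC C Nf pv (i + 1) pos =
          (fillC C Nf pv (t - pos) pos t (i + 1) ∪ (pv (i + 1)).1.image (· + t) ∪ RP, E) := by
        rw [packC, ← htdef, ← hedef, ← hEdef, ← hRPdef]
      obtain ⟨f1F, f3F, f4F⟩ := fill_main (hlg.down hcap) (t - pos) pos t le_rfl
      set F := fillC C Nf pv (t - pos) pos t (i + 1) with hFdef
      rw [hPeq]
      set P := F ∪ (pv (i + 1)).1.image (· + t) ∪ RP with hPdef
      have hmemP : ∀ u, u ∈ P ↔ u ∈ F ∨ (∃ s ∈ (pv (i + 1)).1, s + t = u) ∨ u ∈ RP := by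
        intro u
        simp [hPdef, Finset.mem_union, Finset.mem_image, or_assoc]
      have hlilam : lilam Nf pv (i + 1) = Nf (pv (i + 1)).1 + (pv (i + 1)).2 + 2 := rfl
      have hXis : Xi Nf pv (i + 1) = Xi Nf pv i + lilam Nf pv (i + 1) := rfl
      have hp0 : pos < E ∧ E ≤ pos + Xi Nf pv (i + 1) := ⟨by omega, by omega⟩
      have hp1 : ∀ u ∈ P, (pos < u ∧ u ≤ E) ∧ u ∈ C := by
        intro u hu
        rcases (hmemP u).mp hu with h | ⟨s, hs, rfl⟩ | h
        · have := f1F u h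
          exact ⟨⟨this.1.1, by omega⟩, this.2⟩
        · have hsb := hlg.bdd (i + 1) hcap s hs
          refine ⟨⟨by omega, by omega⟩, ?_⟩
          have := ht3 s hs
          rwa [add_comm] at this
        · have := q1 u h
          exact ⟨⟨by omega, this.1.2⟩, this.2⟩
      have htP : t ∈ P := (hmemP t).mpr (Or.inr (Or.inl ⟨0, hlg.zero_mem (i + 1) hcap, by omega⟩))
      have hIso : ∀ u ∈ P, t < u → u ≤ e → u - t ∈ (pv (i + 1)).1 := by
        intro u hu h1 h2
        rcases (hmemP u).mp hu with h | ⟨s, hs, rfl⟩ | h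
        · have := f1F u h
          omega
        · have : s + t - t = s := by omega
          rwa [this]
        · have := q1 u h
          omega
      have hcleant : ∀ j, j ≤ i + 1 → CleanIn C P (pv j).2 t := by
        intro j hj
        have hmono := hlg.mono (i + 1) hcap j hj
        refine ⟨htP, fun u hu h1 h2 => ?_⟩
        have hmem := hIso u hu h1 (by omega)
        rcases hlg.subC (i + 1) hcap _ hmem with h | h
        · exact h
        · omega
      have hliftF : ∀ lj r, r + lj < t → CleanIn C F lj r → CleanIn C P lj r := by
        rintro lj r hrt ⟨hrm, hcl⟩
        refine ⟨(hmemP r).mpr (Or.inl hrm), fun u hu h1 h2 => ?_⟩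
        rcases (hmemP u).mp hu with h | ⟨s, hs, rfl⟩ | h
        · exact hcl u h h1 h2
        · omega
        · have := q1 u h
          omega
      have hliftR : ∀ lj r, e < r → CleanIn C RP lj r → CleanIn C P lj r := by
        rintro lj r hrt ⟨hrm, hcl⟩
        refine ⟨(hmemP r).mpr (Or.inr (Or.inr hrm)), fun u hu h1 h2 => ?_⟩
        rcases (hmemP u).mp hu with h | ⟨s, hs, rfl⟩ | h
        · have := f1F u h
          omega
        · have hsb := hlg.bdd (i + 1) hcap s hs
          omega
        · exact hcl u h h1 h2
      have hliftI : ∀ j, ∀ r', r' + (pv j).2 ≤ (pv (i + 1)).2 →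
          CleanIn C (pv (i + 1)).1 (pv j).2 r' → CleanIn C P (pv j).2 (t + r') := by
        rintro j r' hr' ⟨hrm, hcl⟩
        refine ⟨(hmemP _).mpr (Or.inr (Or.inl ⟨r', hrm, by omega⟩)), fun u hu h1 h2 => ?_⟩
        have hu2 : u ≤ e := by omega
        have hmem := hIso u hu (by omega) hu2
        have := hcl (u - t) hmem (by omega) (by omega)
        have heq : u - t - r' = u - (t + r') := by omega
        rwa [heq] at this
      refine ⟨hp0, hp1, ?_, ?_, ?_⟩
      · -- p3
        intro j hj x hx hxU
        have hU := lam_le_Uu (Nf := Nf) (pv := pv) j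
        have hT := lam_lt_Tt (Nf := Nf) (pv := pv) j
        have hTU := Tt_add_bigL_le_Uu (Nf := Nf) (pv := pv) j
        have hUdef : Uu Nf pv j = (pv j).2 + Xi Nf pv j + 2 * bigL Nf pv j + 16 := rfl
        have hXm : Xi Nf pv j ≤ Xi Nf pv (i + 1) := Xi_mono Nf pv hj
        rcases Nat.lt_or_ge (x + Uu Nf pv j) t with hc1 | hc1
        · obtain ⟨r, hr1, hr2, hr3, hr4⟩ := f3F j (by omega) x hx hc1
          exact ⟨r, hr1, hr2, by omega, hliftF _ r (by omega) hr4⟩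
        rcases le_or_gt x t with hc2 | hc2
        · have hmono := hlg.mono (i + 1) hcap j hj
          exact ⟨t, hc2, by omega, by omega, hcleant j hj⟩
        rcases le_or_gt e x with hc5 | hc5
        · -- window inside the rest
          have hji : j ≤ i := by
            rcases Nat.lt_or_ge j (i + 1) with h | h
            · omega
            · exfalso
              have hji' : j = i + 1 := by omega
              subst hji'
              omega
          obtain ⟨r, hr1, hr2, hr3, hr4⟩ := q3 j hji x hc5 hxU
          refine ⟨r, hr1, hr2, hr3, hliftR _ r ?_ hr4⟩
          have := q1 r hr4.1
          omega
        rcases le_or_gt (x + Uu Nf pv j) e with hc3 | hc3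
        · -- inside the block
          have hij : j < i + 1 := by
            rcases Nat.lt_or_ge j (i + 1) with h | h
            · exact h
            · exfalso
              have hji' : j = i + 1 := by omega
              subst hji'
              omega
          obtain ⟨r', hr1, hr2, hr3, hr4⟩ :=
            hlg.interior (i + 1) hcap j hij (x - t) (by omega)
          exact ⟨t + r', by omega, by omega, by omega, hliftI j r' hr3 hr4⟩
        · rcases le_or_gt (x + Tt Nf pv j) e with hc4 | hc4
          · -- tail cleans of the block
            have hij : j < i + 1 := by
              rcases Nat.lt_or_ge j (i + 1) with h | h
              · exact h
              · exfalso
                have hji' : j = i + 1 := by omega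
                subst hji'
                have hTd : Tt Nf pv (i + 1) = Xi Nf pv (i + 1) + (pv (i + 1)).2 + 2 := rfl
                omega
            obtain ⟨r', hr1, hr2, hr3⟩ := hlg.tail (i + 1) hcap j hij
            exact ⟨t + r', by omega, by omega, by omega, hliftI j r' hr2 hr3⟩
          · -- front cleans of the rest
            have hji : j ≤ i := by
              rcases Nat.lt_or_ge j (i + 1) with h | h
              · omega
              · exfalso
                have hji' : j = i + 1 := by omega
                subst hji'
                omega
            obtain ⟨r, hr1, hr2, hr3, hr4⟩ := q5 j hji
            refine ⟨r, by omega, by omega, hr3, hliftR _ r hr1 hr4⟩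
      · -- p4
        intro j hj
        rcases Nat.lt_or_ge j (i + 1) with hij | hij
        · obtain ⟨r, hr1, hr2, hr3⟩ := q4 j (by omega)
          refine ⟨r, hr1, hr2, hliftR _ r ?_ hr3⟩
          have := q1 r hr3.1
          omega
        · have : j = i + 1 := by omega
          subst this
          have hTd : Tt Nf pv (i + 1) = Xi Nf pv (i + 1) + (pv (i + 1)).2 + 2 := rfl
          exact ⟨t, by omega, by omega, hcleant (i + 1) le_rfl⟩
      · -- p5
        intro j hj
        have hmono := hlg.mono (i + 1) hcap j hj
        have hLb := lilam_le_bigL Nf pv (le_refl j)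
        have hLd : lilam Nf pv j = Nf (pv j).1 + (pv j).2 + 2 := rfl
        rcases le_or_gt t (pos + bigL Nf pv j) with hc | hc
        · exact ⟨t, ht1, hc, by omega, hcleant j hj⟩
        · have hfeas : pos + Nf (pv j).1 + (pv j).2 + 1 < t := by omega
          obtain ⟨r, hr1, hr2, hr3, hr4⟩ := f4F j (by omega) hfeas
          exact ⟨r, hr1, hr2, by omega, hliftF _ r (by omega) hr4⟩

end CorePack

section CoreStage
open Set Classical

attribute [local instance] Classical.propDecidable

variable {C : Set ℕ} {Nf : Finset ℕ → ℕ} {pv pv' : ℕ → Finset ℕ × ℕ}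

lemma LG_congr {cap : ℕ} (hag : ∀ i ≤ cap, pv i = pv' i) (h : LG C Nf pv cap) :
    LG C Nf pv' cap := by
  constructor
  · intro i hi a
    rw [← hag i hi]
    exact h.hitp i hi a
  · intro i hi
    rw [← hag i hi]
    exact h.zero_mem i hi
  · intro i hi
    rw [← hag i hi]
    exact h.subC i hi
  · intro i hi
    rw [← hag i hi]
    exact h.bdd i hi
  · intro i hi
    rw [← hag i hi]
    exact h.posl i hi
  · intro i hi k hk
    rw [← hag i hi, ← hag k (le_trans hk hi)]
    exact h.mono i hi k hk
  · intro i hi j hj x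
    rw [← hag i hi, ← hag j (le_trans (le_of_lt hj) hi),
      ← Uu_congr Nf pv (fun k hk => hag k (le_trans hk (le_trans (le_of_lt hj) hi)))]
    exact h.interior i hi j hj x
  · intro i hi j hj
    rw [← hag i hi, ← hag j (le_trans (le_of_lt hj) hi),
      ← Tt_congr Nf pv (fun k hk => hag k (le_trans hk (le_trans (le_of_lt hj) hi)))]
    exact h.tail i hi j hj

end CoreStage

section CoreFinal
open Set Classical

attribute [local instance] Classical.propDecidable

variable {C : Set ℕ} {Nf : Finset ℕ → ℕ}

/-- the diagonal: the final pattern of each level. -/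
noncomputable def spd (C : Set ℕ) (Nf : Finset ℕ → ℕ) (i : ℕ) : Finset ℕ × ℕ :=
  stages C Nf i i

lemma stages_eq_spd (g i : ℕ) (h : i ≤ g) : stages C Nf g i = spd C Nf i :=
  stages_stable' C Nf i g i le_rfl h

lemma spd_succ (g : ℕ) :
    spd C Nf (g + 1) =
      ((spd C Nf g).1 ∪ (packC C Nf (stages C Nf g) g (stages C Nf g g).2).1,
        (packC C Nf (stages C Nf g) g (stages C Nf g g).2).2) := by
  show stages C Nf (g + 1) (g + 1) = _
  rw [stages]
  simp only [if_neg (by omega : ¬ g + 1 ≤ g)]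
  rfl

variable (hNf : ∀ Q : Finset ℕ, (Q : Set ℕ) ⊆ C ∪ {0} →
    ∀ m : ℕ, ∃ t, m < t ∧ t ≤ m + Nf Q ∧ ∀ q ∈ Q, t + q ∈ C)

include hNf

theorem stage_good : ∀ g, LG C Nf (spd C Nf) g := by
  intro g
  induction g with
  | zero =>
      have hpat : spd C Nf 0 = ({0}, 1) := rfl
      have hsub : ((({0} : Finset ℕ)) : Set ℕ) ⊆ C ∪ {0} := by
        intro x hx
        simp only [Finset.coe_singleton, mem_singleton_iff] at hx
        exact Or.inr (by simpa using hx)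
      constructor <;> intro i hi
      · interval_cases i
        intro a
        exact hitf_spec (hNf {0} hsub) a
      · interval_cases i
        simp [hpat]
      · interval_cases i
        intro x hx
        rw [hpat] at hx
        simp only [Finset.mem_singleton] at hx
        omega
      · interval_cases i
        intro x hx
        rw [hpat] at hx
        simp only [Finset.mem_singleton] at hx
        omega
      · interval_cases i
        simp [hpat]
      · interval_cases i
        intro k hk
        interval_cases k
        simp
      · interval_cases i
        intro j hj
        omega
      · interval_cases i
        intro j hj
        omega
  | succ g ihg =>
      have hag : ∀ i ≤ g, spd C Nf i = stages C Nf g i :=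
        fun i hi => (stages_eq_spd g i hi).symm
      have hlg' : LG C Nf (stages C Nf g) g := LG_congr hag ihg
      have hdiag : stages C Nf g g = spd C Nf g := stages_eq_spd g g le_rfl
      obtain ⟨⟨q01, q02⟩, q1, q3, q4, q5⟩ :=
        pack_main hlg' g le_rfl (stages C Nf g g).2
      -- translate the constants to the diagonal
      have hagU : ∀ j ≤ g, Uu Nf (stages C Nf g) j = Uu Nf (spd C Nf) j :=
        fun j hj => Uu_congr Nf (stages C Nf g) (fun k hk => stages_eq_spd g k (le_trans hk hj))
      have hagT : ∀ j ≤ g, Tt Nf (stages C Nf g) j = Tt Nf (spd C Nf) j :=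
        fun j hj => Tt_congr Nf (stages C Nf g) (fun k hk => stages_eq_spd g k (le_trans hk hj))
      have hagB : ∀ j ≤ g, bigL Nf (stages C Nf g) j = bigL Nf (spd C Nf) j :=
        fun j hj => bigL_congr Nf (stages C Nf g) (fun k hk => stages_eq_spd g k (le_trans hk hj))
      have hagP : ∀ j ≤ g, (stages C Nf g j).1 = (spd C Nf j).1 :=
        fun j hj => by rw [stages_eq_spd g j hj]
      have hagL : ∀ j ≤ g, (stages C Nf g j).2 = (spd C Nf j).2 :=
        fun j hj => by rw [stages_eq_spd g j hj]
      set lamg := (stages C Nf g g).2 with hlamg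
      set pk := packC C Nf (stages C Nf g) g lamg with hpk
      set Sg := (spd C Nf g).1 with hSg
      set E := pk.2 with hE
      have hsp : spd C Nf (g + 1) = (Sg ∪ pk.1, E) := by
        rw [spd_succ]
      have hlamg' : lamg = (spd C Nf g).2 := by rw [hlamg, hdiag]
      have hoS : ∀ u ∈ Sg, u ≤ lamg := by
        intro u hu
        rw [hlamg', ← hSg] at *
        exact ihg.bdd g le_rfl u hu
      have hnP : ∀ u ∈ pk.1, lamg < u ∧ u ≤ E ∧ u ∈ C := by
        intro u hu
        have := q1 u hu
        exact ⟨this.1.1, this.1.2, this.2⟩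
      have hlamgE : lamg < E := q01
      have hnew : spd C Nf (g + 1) = (Sg ∪ pk.1, E) := hsp
      have hmemT : ∀ u, u ∈ (spd C Nf (g + 1)).1 ↔ u ∈ Sg ∨ u ∈ pk.1 := by
        intro u
        rw [hnew]
        simp [Finset.mem_union]
      -- lifting of clean sets
      have hliftOld : ∀ lj r, r + lj ≤ lamg → CleanIn C Sg lj r →
          CleanIn C (spd C Nf (g + 1)).1 lj r := by
        rintro lj r hr ⟨hrm, hcl⟩
        refine ⟨(hmemT r).mpr (Or.inl hrm), fun u hu h1 h2 => ?_⟩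
        rcases (hmemT u).mp hu with h | h
        · exact hcl u h h1 h2
        · have := hnP u h
          omega
      have hliftNew : ∀ lj r, CleanIn C pk.1 lj r →
          CleanIn C (spd C Nf (g + 1)).1 lj r := by
        rintro lj r ⟨hrm, hcl⟩
        have hrb := hnP r hrm
        refine ⟨(hmemT r).mpr (Or.inr hrm), fun u hu h1 h2 => ?_⟩
        rcases (hmemT u).mp hu with h | h
        · have := hoS u h
          omega
        · exact hcl u h h1 h2
      -- subC for the new pattern
      have hsubC : ∀ x ∈ (spd C Nf (g + 1)).1, x ∈ C ∨ x = 0 := by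
        intro x hx
        rcases (hmemT x).mp hx with h | h
        · exact ihg.subC g le_rfl x h
        · exact Or.inl (hnP x h).2.2
      have hsubC' : (((spd C Nf (g + 1)).1 : Finset ℕ) : Set ℕ) ⊆ C ∪ {0} := by
        intro x hx
        rcases hsubC x hx with h | h
        · exact Or.inl h
        · exact Or.inr (by simpa using h)
      constructor
      · -- hitp
        intro i hi
        rcases Nat.lt_or_ge i (g + 1) with h | h
        · exact ihg.hitp i (by omega)
        · have : i = g + 1 := by omega
          subst this
          intro a
          exact hitf_spec (hNf _ hsubC') a
      · -- zero_mem
        intro i hi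
        rcases Nat.lt_or_ge i (g + 1) with h | h
        · exact ihg.zero_mem i (by omega)
        · have : i = g + 1 := by omega
          subst this
          exact (hmemT 0).mpr (Or.inl (ihg.zero_mem g le_rfl))
      · -- subC
        intro i hi
        rcases Nat.lt_or_ge i (g + 1) with h | h
        · exact ihg.subC i (by omega)
        · have : i = g + 1 := by omega
          subst this
          exact hsubC
      · -- bdd
        intro i hi
        rcases Nat.lt_or_ge i (g + 1) with h | h
        · exact ihg.bdd i (by omega)
        · have : i = g + 1 := by omega
          subst this
          intro x hx
          rw [hnew]
          rcases (hmemT x).mp hx with h | h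
          · have := hoS x h
            omega
          · exact (hnP x h).2.1
      · -- posl
        intro i hi
        rcases Nat.lt_or_ge i (g + 1) with h | h
        · exact ihg.posl i (by omega)
        · have : i = g + 1 := by omega
          subst this
          rw [hnew]
          have := ihg.posl g le_rfl
          show 1 ≤ E
          omega
      · -- mono
        intro i hi k hk
        rcases Nat.lt_or_ge i (g + 1) with h | h
        · exact ihg.mono i (by omega) k hk
        · have : i = g + 1 := by omega
          subst this
          rcases Nat.lt_or_ge k (g + 1) with h2 | h2
          · have hk2 : (spd C Nf k).2 ≤ (spd C Nf g).2 := by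
              rcases Nat.lt_or_ge k g with h3 | h3
              · exact ihg.mono g le_rfl k (by omega)
              · have : k = g := by omega
                subst this
                exact le_rfl
            rw [hnew]
            show (spd C Nf k).2 ≤ E
            omega
          · have : k = g + 1 := by omega
            subst this
            exact le_rfl
      · -- interior
        intro i hi j hj x hx
        rcases Nat.lt_or_ge i (g + 1) with h | h
        · exact ihg.interior i (by omega) j hj x hx
        · have : i = g + 1 := by omega
          subst this
          have hjg : j ≤ g := by omega
          have hE2 : (spd C Nf (g + 1)).2 = E := by rw [hnew]
          have hUd : Uu Nf (spd C Nf) j = (spd C Nf j).2 + Xi Nf (spd C Nf) j +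
              2 * bigL Nf (spd C Nf) j + 16 := rfl
          have hlamj : (spd C Nf j).2 ≤ (spd C Nf g).2 := by
            rcases Nat.lt_or_ge j g with h3 | h3
            · exact ihg.mono g le_rfl j (by omega)
            · have : j = g := by omega
              subst this
              exact le_rfl
          rcases le_or_gt (x + Uu Nf (spd C Nf) j) (spd C Nf g).2 with hA | hA
          · -- window inside the old pattern
            have hjg' : j < g := by
              rcases Nat.lt_or_ge j g with h3 | h3
              · exact h3
              · exfalso
                have : j = g := by omega
                subst this
                have hXb := bigL_le_Xi Nf (spd C Nf) j
                omega
            obtain ⟨r, hr1, hr2, hr3, hr4⟩ := ihg.interior g le_rfl j hjg' x hA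
            exact ⟨r, hr1, hr2, by omega, hliftOld _ r (by rw [← hlamg'] at hr3; omega) hr4⟩
          rcases le_or_gt lamg x with hB | hB
          · -- window inside the pack
            obtain ⟨r, hr1, hr2, hr3, hr4⟩ := q3 j hjg x hB
              (by rw [hagU j hjg]; omega)
            rw [hagL j hjg] at hr3 hr4
            rw [hagU j hjg] at hr2
            exact ⟨r, hr1, hr2, by omega, hliftNew _ r hr4⟩
          · -- straddle
            rcases le_or_gt (x + Tt Nf (spd C Nf) j) lamg with hC | hC
            · -- use the tail of the old pattern
              have hjg' : j < g := by
                rcases Nat.lt_or_ge j g with h3 | h3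
                · exact h3
                · exfalso
                  have : j = g := by omega
                  subst this
                  have hTd : Tt Nf (spd C Nf) j = Xi Nf (spd C Nf) j + (spd C Nf j).2 + 2 := rfl
                  omega
              obtain ⟨r, hr1, hr2, hr3⟩ := ihg.tail g le_rfl j hjg'
              rw [← hlamg'] at hr1 hr2
              have hTd : Tt Nf (spd C Nf) j = Xi Nf (spd C Nf) j + (spd C Nf j).2 + 2 := rfl
              exact ⟨r, by omega, by omega, by omega, hliftOld _ r (by omega) hr3⟩
            · -- use the front of the pack
              obtain ⟨r, hr1, hr2, hr3, hr4⟩ := q5 j hjg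
              rw [hagB j hjg] at hr2
              rw [hagL j hjg] at hr3 hr4
              have hTB := Tt_add_bigL_le_Uu (Nf := Nf) (pv := spd C Nf) j
              exact ⟨r, by omega, by omega, by omega, hliftNew _ r hr4⟩
      · -- tail
        intro i hi j hj
        rcases Nat.lt_or_ge i (g + 1) with h | h
        · exact ihg.tail i (by omega) j hj
        · have : i = g + 1 := by omega
          subst this
          have hjg : j ≤ g := by omega
          have hE2 : (spd C Nf (g + 1)).2 = E := by rw [hnew]
          obtain ⟨r, hr1, hr2, hr3⟩ := q4 j hjg
          rw [hagT j hjg] at hr1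
          rw [hagL j hjg] at hr2 hr3
          exact ⟨r, by omega, by omega, hliftNew _ r hr3⟩

end CoreFinal

section CoreW
open Set Classical

attribute [local instance] Classical.propDecidable

variable {C : Set ℕ} {Nf : Finset ℕ → ℕ}
variable (hNf : ∀ Q : Finset ℕ, (Q : Set ℕ) ⊆ C ∪ {0} →
    ∀ m : ℕ, ∃ t, m < t ∧ t ≤ m + Nf Q ∧ ∀ q ∈ Q, t + q ∈ C)

include hNf

lemma spd_facts (g : ℕ) :
    (spd C Nf g).2 < (spd C Nf (g + 1)).2 ∧
    (spd C Nf g).1 ⊆ (spd C Nf (g + 1)).1 ∧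
    ∀ u ∈ (spd C Nf (g + 1)).1, u ≤ (spd C Nf g).2 → u ∈ (spd C Nf g).1 := by
  have hlg' : LG C Nf (stages C Nf g) g :=
    LG_congr (fun i hi => (stages_eq_spd g i hi).symm) (stage_good hNf g)
  obtain ⟨⟨q01, q02⟩, q1, -, -, -⟩ := pack_main hlg' g le_rfl (stages C Nf g g).2
  have hsp := spd_succ (C := C) (Nf := Nf) g
  have hd : (stages C Nf g g).2 = (spd C Nf g).2 := rfl
  refine ⟨?_, ?_, ?_⟩
  · rw [hsp]
    show (stages C Nf g g).2 < _
    exact q01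
  · intro x hx
    rw [hsp]
    exact Finset.mem_union_left _ hx
  · intro u hu hle
    rw [hsp] at hu
    rcases Finset.mem_union.mp hu with h | h
    · exact h
    · exfalso
      have := q1 u h
      omega

lemma spd_mono_len {g g' : ℕ} (h : g ≤ g') : (spd C Nf g).2 ≤ (spd C Nf g').2 := by
  induction g' with
  | zero => have : g = 0 := by omega
            subst this; rfl
  | succ g' ih =>
      rcases Nat.lt_or_ge g' g with h2 | h2
      · have : g = g' + 1 := by omega
        subst this; rfl
      · exact le_trans (ih h2) (le_of_lt (spd_facts hNf g').1)

lemma spd_sub {g g' : ℕ} (h : g ≤ g') : (spd C Nf g).1 ⊆ (spd C Nf g').1 := by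
  induction g' with
  | zero => have : g = 0 := by omega
            subst this; exact fun x hx => hx
  | succ g' ih =>
      rcases Nat.lt_or_ge g' g with h2 | h2
      · have : g = g' + 1 := by omega
        subst this; exact fun x hx => hx
      · exact fun x hx => (spd_facts hNf g').2.1 (ih h2 hx)

lemma spd_rev {g g' : ℕ} (h : g ≤ g') :
    ∀ u ∈ (spd C Nf g').1, u ≤ (spd C Nf g).2 → u ∈ (spd C Nf g).1 := by
  induction g' with
  | zero => have : g = 0 := by omega
            subst this; exact fun u hu _ => hu
  | succ g' ih =>
      rcases Nat.lt_or_ge g' g with h2 | h2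
      · have : g = g' + 1 := by omega
        subst this; exact fun u hu _ => hu
      · intro u hu hle
        have hle' : u ≤ (spd C Nf g').2 := le_trans hle (spd_mono_len hNf h2)
        exact ih h2 u ((spd_facts hNf g').2.2 u hu hle') hle

lemma spd_len_ge (g : ℕ) : g + 1 ≤ (spd C Nf g).2 := by
  induction g with
  | zero => exact le_rfl
  | succ g ih =>
      have := (spd_facts hNf g).1
      omega

end CoreW

/-- The core combinatorial construction. -/
lemma core_construction' (C : Set ℕ)
    (hSC : ∀ Q : Finset ℕ, (Q : Set ℕ) ⊆ C ∪ {0} →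
      ∃ N : ℕ, ∀ m : ℕ, ∃ t, m < t ∧ t ≤ m + N ∧ ∀ q ∈ Q, t + q ∈ C) :
    ∃ W : Set ℕ, ∀ L : ℕ, ∃ N : ℕ, ∀ m : ℕ, ∃ a, m < a ∧ a ≤ m + N ∧ a ∈ W ∧
      ∀ j, 1 ≤ j → j ≤ L → a + j ∈ W → j ∈ C := by
  classical
  choose! Nf hNf using hSC
  refine ⟨{n | ∃ g, n ∈ (spd C Nf g).1}, ?_⟩
  intro L
  refine ⟨Uu Nf (spd C Nf) L + 1, ?_⟩
  intro m
  set g := L + 1 + (m + 1 + Uu Nf (spd C Nf) L) with hg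
  have hgood := stage_good hNf g
  have hLg : L < g := by omega
  have hlen : m + 1 + Uu Nf (spd C Nf) L ≤ (spd C Nf g).2 := by
    have := spd_len_ge hNf g
    omega
  obtain ⟨r, hr1, hr2, hr3, hr4⟩ := hgood.interior g le_rfl L hLg (m + 1) hlen
  have hlamL := spd_len_ge hNf L
  refine ⟨r, by omega, by omega, ⟨g, hr4.1⟩, ?_⟩
  intro k hk1 hkL hkW
  obtain ⟨g', hg'⟩ := hkW
  have hrk : r + k ∈ (spd C Nf g).1 := by
    rcases le_or_gt g' g with h | h
    · exact spd_sub hNf h hg'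
    · refine spd_rev hNf (le_of_lt h) _ hg' ?_
      omega
  have := hr4.2 (r + k) hrk (by omega) (by omega)
  have heq : r + k - r = k := by omega
  rwa [heq] at this

section Glue
open Set Function

lemma not_three_not_one (A : Set ℕ+) (S : Set ℕ+) (hSsyn : Syndetic S)
    (h : ∀ F : Finset ℕ+, (F : Set ℕ+) ⊆ A → ∃ S', S' ⊆ S ∧ Syndetic S' ∧
        ((F : Set ℕ+) ∩ shiftSet S S') = ∅) : ¬ PointwiseRecurrent A := by
  classical
  set y : ℕ → ℝ := fun n => if n ∈ natSet S then 1 else 0 with hy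
  have hycube : y ∈ cube := by
    intro n
    by_cases hn : n ∈ natSet S <;> simp [hy, hn]
  have hNE : Nonempty {F : Finset ℕ+ // (F : Set ℕ+) ⊆ A} := ⟨⟨∅, by simp⟩⟩
  set V : {F : Finset ℕ+ // (F : Set ℕ+) ⊆ A} → Set (ℕ → ℝ) :=
    fun F => {w | w 0 = 1 ∧ ∀ f ∈ F.1, w ((f : ℕ+) : ℕ) = 0} with hV
  have hVeq : ∀ F, V F = {w : ℕ → ℝ | w 0 = 1} ∩ ⋂ f ∈ F.1, {w : ℕ → ℝ | w ((f:ℕ+):ℕ) = 0} := by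
    intro F
    ext w
    simp [hV, mem_iInter]
  have hVc : ∀ F, IsClosed (V F) := by
    intro F
    rw [hVeq]
    refine (isClosed_eq (continuous_apply 0) continuous_const).inter ?_
    exact isClosed_biInter fun f _ => isClosed_eq (continuous_apply _) continuous_const
  have hdir : ∀ i j, ∃ k, V k ⊆ V i ∧ V k ⊆ V j := by
    rintro ⟨F1, h1⟩ ⟨F2, h2⟩
    refine ⟨⟨F1 ∪ F2, ?_⟩, ?_, ?_⟩
    · intro f hf
      rcases Finset.mem_union.mp hf with hf | hf
      · exact h1 hf
      · exact h2 hf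
    · rintro w ⟨hw0, hwf⟩
      exact ⟨hw0, fun f hf => hwf f (Finset.mem_union_left _ hf)⟩
    · rintro w ⟨hw0, hwf⟩
      exact ⟨hw0, fun f hf => hwf f (Finset.mem_union_right _ hf)⟩
  have hsyn : ∀ F, ∃ N : ℕ, ∀ m : ℕ, ∃ k, m < k ∧ k ≤ m + N ∧ shmap^[k] y ∈ V F := by
    rintro ⟨F, hF⟩
    obtain ⟨S', hS'S, hS'syn, hS'empty⟩ := h F hF
    rw [syndetic_iff_synN] at hS'syn
    obtain ⟨N, hN⟩ := hS'syn
    refine ⟨N, fun m => ?_⟩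
    obtain ⟨t, h1, h2, h3⟩ := hN m
    obtain ⟨hp, hmem⟩ := h3
    refine ⟨t, h1, h2, ?_, ?_⟩
    · show shmap^[t] y 0 = 1
      rw [shmap_iter_apply]
      have : t ∈ natSet S := ⟨hp, hS'S hmem⟩
      simp [hy, this]
    · intro f hfF
      show shmap^[t] y ((f : ℕ+) : ℕ) = 0
      rw [shmap_iter_apply]
      have hnot : ¬ ((f : ℕ+) : ℕ) + t ∈ natSet S := by
        rintro ⟨hp2, hmem2⟩
        have hfs : f ∈ shiftSet S S' := by
          refine mem_iUnion₂.mpr ⟨⟨t, hp⟩, hmem, ?_⟩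
          show f + ⟨t, hp⟩ ∈ S
          have : (f + ⟨t, hp⟩ : ℕ+) = ⟨((f : ℕ+) : ℕ) + t, hp2⟩ := by
            apply Subtype.ext
            rfl
          rwa [this]
        have : f ∈ (F : Set ℕ+) ∩ shiftSet S S' := ⟨hfF, hfs⟩
        rw [hS'empty] at this
        exact this
      simp [hy, hnot]
  obtain ⟨M, hMcube, hMne, hMcl, hMinv, hMmin, z, hzM, hzV⟩ :=
    machine y hycube V hVc hdir hsyn
  have hz0 : z 0 = 1 := (hzV ⟨∅, by simp⟩).1
  have hzA : ∀ a : ℕ+, a ∈ A → z ((a : ℕ)) ≠ 1 := by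
    intro a ha
    have := (hzV ⟨{a}, by simpa using ha⟩).2 a (Finset.mem_singleton_self a)
    rw [this]
    norm_num
  exact not_pointwiseRecurrent_of_witness A M hMcube hMne hMcl hMinv hMmin z hzM hz0 hzA

/-- The core combinatorial construction (proved later). -/
lemma core_construction (C : Set ℕ) (hC : ∀ n ∈ C, 0 < n)
    (hSC : ∀ Q : Finset ℕ, (Q : Set ℕ) ⊆ C ∪ {0} →
      ∃ N : ℕ, ∀ m : ℕ, ∃ t, m < t ∧ t ≤ m + N ∧ ∀ q ∈ Q, t + q ∈ C) :
    ∃ W : Set ℕ, ∀ L : ℕ, ∃ N : ℕ, ∀ m : ℕ, ∃ a, m < a ∧ a ≤ m + N ∧ a ∈ W ∧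
      ∀ j, 1 ≤ j → j ≤ L → a + j ∈ W → j ∈ C :=
  core_construction' C hSC

lemma not_two_not_one (A : Set ℕ+) (B : Set ℕ+) (hAB : A ⊆ B)
    (h : ∀ F : Finset ℕ+, (F : Set ℕ+) ⊆ Bᶜ → ¬ Thick (B ∪ ⋃ f ∈ F, shiftN B f)) :
    ¬ PointwiseRecurrent A := by
  classical
  set C : Set ℕ := natSet Bᶜ with hC
  have hCpos : ∀ n ∈ C, 0 < n := fun n hn => hn.1
  have hSC : ∀ Q : Finset ℕ, (Q : Set ℕ) ⊆ C ∪ {0} →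
      ∃ N : ℕ, ∀ m : ℕ, ∃ t, m < t ∧ t ≤ m + N ∧ ∀ q ∈ Q, t + q ∈ C := by
    intro Q hQ
    set F : Finset ℕ+ := Q.subtype (fun n => 0 < n) with hF
    have hFsub : (F : Set ℕ+) ⊆ Bᶜ := by
      intro f hf
      have hfQ : (f : ℕ) ∈ Q := by
        have := Finset.mem_coe.mp hf
        exact Finset.mem_subtype.mp this
      rcases hQ hfQ with hmem | hmem
      · rw [← coe_mem_natSet]
        exact hmem
      · exact absurd hmem (by simpa using f.2.ne')
    have hnt := h F hFsub
    have hsynd0 := syndetic_compl_of_not_thick hnt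
    have hcompl : (B ∪ ⋃ f ∈ F, shiftN B f)ᶜ = Bᶜ ∩ ⋂ f ∈ F, shiftN Bᶜ f := by
      rw [compl_union, compl_iUnion₂]
      rfl
    rw [hcompl] at hsynd0
    rw [syndetic_iff_synN] at hsynd0
    obtain ⟨N, hN⟩ := hsynd0
    refine ⟨N, fun m => ?_⟩
    obtain ⟨t, h1, h2, h3⟩ := hN m
    obtain ⟨hp, hmem⟩ := h3
    refine ⟨t, h1, h2, fun q hq => ?_⟩
    by_cases hq0 : q = 0
    · subst hq0
      exact ⟨by omega, hmem.1⟩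
    · have hqC : q ∈ C ∪ {0} := hQ hq
      have hqpos : 0 < q := by
        rcases hqC with hmem2 | hmem2
        · exact hCpos q hmem2
        · exact absurd hmem2 (by simpa using hq0)
      have hqF : (⟨q, hqpos⟩ : ℕ+) ∈ F := by
        exact Finset.mem_subtype.mpr hq
      have hsh := mem_iInter₂.mp hmem.2 _ hqF
      have : (⟨t, hp⟩ : ℕ+) + ⟨q, hqpos⟩ ∈ Bᶜ := hsh
      refine ⟨by omega, ?_⟩
      have heq : (⟨t + q, by omega⟩ : ℕ+) = (⟨t, hp⟩ : ℕ+) + ⟨q, hqpos⟩ := by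
        apply Subtype.ext
        rfl
      rw [heq]
      exact this
  obtain ⟨W, hW⟩ := core_construction C hCpos hSC
  set y : ℕ → ℝ := fun n => if n ∈ W then 1 else 0 with hy
  have hycube : y ∈ cube := by
    intro n
    by_cases hn : n ∈ W <;> simp [hy, hn]
  set V : ℕ → Set (ℕ → ℝ) :=
    fun L => {w | w 0 = 1 ∧ ∀ j, 1 ≤ j → j ≤ L → j ∉ C → w j = 0} with hV
  have hVc : ∀ L, IsClosed (V L) := by
    intro L
    have : V L = {w : ℕ → ℝ | w 0 = 1} ∩
        ⋂ (j : ℕ) (_ : 1 ≤ j) (_ : j ≤ L) (_ : j ∉ C), {w : ℕ → ℝ | w j = 0} := by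
      ext w
      simp [hV, mem_iInter]
    rw [this]
    refine (isClosed_eq (continuous_apply 0) continuous_const).inter ?_
    exact isClosed_iInter fun j => isClosed_iInter fun _ => isClosed_iInter fun _ =>
      isClosed_iInter fun _ => isClosed_eq (continuous_apply _) continuous_const
  have hdir : ∀ i j, ∃ k, V k ⊆ V i ∧ V k ⊆ V j := by
    intro i j
    refine ⟨max i j, ?_, ?_⟩
    · rintro w ⟨hw0, hwf⟩
      exact ⟨hw0, fun l hl1 hl2 hl3 => hwf l hl1 (le_trans hl2 (le_max_left _ _)) hl3⟩
    · rintro w ⟨hw0, hwf⟩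
      exact ⟨hw0, fun l hl1 hl2 hl3 => hwf l hl1 (le_trans hl2 (le_max_right _ _)) hl3⟩
  have hsyn : ∀ L, ∃ N : ℕ, ∀ m : ℕ, ∃ k, m < k ∧ k ≤ m + N ∧ shmap^[k] y ∈ V L := by
    intro L
    obtain ⟨N, hN⟩ := hW L
    refine ⟨N, fun m => ?_⟩
    obtain ⟨a, h1, h2, h3, h4⟩ := hN m
    refine ⟨a, h1, h2, ?_, ?_⟩
    · show shmap^[a] y 0 = 1
      rw [shmap_iter_apply]
      simp [hy, h3]
    · intro j hj1 hjL hjC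
      show shmap^[a] y j = 0
      rw [shmap_iter_apply]
      have : ¬ (j + a) ∈ W := by
        intro hmem
        exact hjC (h4 j hj1 hjL (by rwa [add_comm]))
      simp [hy, this]
  haveI : Nonempty ℕ := ⟨0⟩
  obtain ⟨M, hMcube, hMne, hMcl, hMinv, hMmin, z, hzM, hzV⟩ :=
    machine y hycube V hVc hdir hsyn
  have hz0 : z 0 = 1 := (hzV 0).1
  have hzA : ∀ a : ℕ+, a ∈ A → z ((a : ℕ)) ≠ 1 := by
    intro a ha
    have haB : a ∈ B := hAB ha
    have haC : ((a : ℕ+) : ℕ) ∉ C := by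
      intro hmem
      rw [coe_mem_natSet] at hmem
      exact hmem haB
    have := (hzV ((a : ℕ+) : ℕ)).2 ((a : ℕ+) : ℕ) a.2 le_rfl haC
    rw [this]
    norm_num
  exact not_pointwiseRecurrent_of_witness A M hMcube hMne hMcl hMinv hMmin z hzM hz0 hzA

end Glue

/-- **Theorem C.** For `A ⊆ ℕ` the following are equivalent:
(1) `A` is a set of pointwise recurrence;
(2) for every `B ⊇ A` there is a finite `F ⊆ ℕ ∖ B` such that `B ∪ (B − F)` is thick;
(3) for every syndetic `S ⊆ ℕ` there is a finite `F ⊆ A` such that for every syndetic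
    `S' ⊆ S` one has `F ∩ (S − S') ≠ ∅`. -/
theorem pointwiseRecurrent_tfae (A : Set ℕ+) :
    (PointwiseRecurrent A ↔
      ∀ B : Set ℕ+, A ⊆ B →
        ∃ F : Finset ℕ+, (F : Set ℕ+) ⊆ Bᶜ ∧ Thick (B ∪ ⋃ f ∈ F, shiftN B f)) ∧
    (PointwiseRecurrent A ↔
      ∀ S : Set ℕ+, Syndetic S →
        ∃ F : Finset ℕ+, (F : Set ℕ+) ⊆ A ∧
          ∀ S' : Set ℕ+, S' ⊆ S → Syndetic S' →
            ((F : Set ℕ+) ∩ shiftSet S S').Nonempty) := by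
  constructor
  · constructor
    · intro h1
      by_contra hcon
      push_neg at hcon
      obtain ⟨B, hAB, hB⟩ := hcon
      refine not_two_not_one A B hAB ?_ h1
      intro F hF
      intro hThick
      exact (hB F hF) hThick
    · exact dir_two_one A
  · constructor
    · intro h1
      by_contra hcon
      push_neg at hcon
      obtain ⟨S, hSsyn, hS⟩ := hcon
      refine not_three_not_one A S hSsyn ?_ h1
      intro F hF
      obtain ⟨S', hS'S, hS'syn, hne⟩ := hS F hF
      exact ⟨S', hS'S, hS'syn, hne⟩
    · exact dir_three_one A
end

section
/- Let 𝔉 be a family of subsets of ℕ. The following are equivalent: (1) 𝔉 is a proper, idempotent filter that is maximal with respect to inclusion among proper, idempotent filters; (2) 𝔉 is an ultrafilter and 𝔉 ⊆ 𝔉 + 𝔉; (3) 𝔉 is an ultrafilter and 𝔉 = 𝔉 + 𝔉. In particular, every proper, idempotent filter is contained in an idempotent ultrafilter. -/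
open Set

/-- An ultrafilter on `ℕ`, viewed combinatorially: a proper filter of subsets such that for
every set either it or its complement is a member. -/
def IsUltra (p : Set (Set ℕ+)) : Prop :=
  IsFilterFamily p ∧ p.Nonempty ∧ ∅ ∉ p ∧ ∀ S : Set ℕ+, S ∈ p ∨ Sᶜ ∈ p

/-!
Ultrafilter families are exactly the sets of members of the ultrafilters of `ℕ+`, and under this
correspondence `𝔭 + 𝔮` is the sum of ultrafilters in the Stone–Čech compactification. Since an
ultrafilter is already maximal among proper filters, (2) ⇒ (1), and (3) ⇒ (2) is trivial; for
(2) ⇒ (3) note that `𝔉 + 𝔉` is again an ultrafilter, so `𝔉 ⊆ 𝔉 + 𝔉` forces equality. Finally, if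
`𝔊` is a proper idempotent filter, the ultrafilters containing `𝔊` form a nonempty closed set which,
by `𝔊 ⊆ 𝔊 + 𝔊`, is a subsemigroup; the Ellis–Numakura lemma gives an idempotent in it, which yields
the last claim and (1) ⇒ (2).
-/

open Filter

attribute [local instance] Ultrafilter.add Ultrafilter.addSemigroup

variable {F G p q : Set (Set ℕ+)}

lemma famSum_mono {F' G' : Set (Set ℕ+)} (hF' : UpwardClosed F') (hF : F ⊆ F') (hG : G ⊆ G') :
    famSum F G ⊆ famSum F' G' :=
  fun _ hA => hF' (hF hA) fun _ hn => hG hn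

lemma IsFilterFamily.compl_notMem (hF : IsFilterFamily F) (hF₀ : ∅ ∉ F) {A : Set ℕ+}
    (hA : A ∈ F) : Aᶜ ∉ F := fun hAc => hF₀ (inter_compl_self A ▸ hF.2 hA hAc)

def IsFilterFamily.toFilter (hF : IsFilterFamily F) (hne : F.Nonempty) : Filter ℕ+ where
  sets := F
  univ_sets := hF.1 hne.some_mem (subset_univ _)
  sets_of_superset := fun hA hAB => hF.1 hA hAB
  inter_sets := fun hA hB => hF.2 hA hB

lemma isUltra_ultrafilter (u : Ultrafilter ℕ+) : IsUltra {A | A ∈ u} :=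
  ⟨⟨fun _ _ hA hAB => mem_of_superset hA hAB, fun _ _ hA hB => inter_mem hA hB⟩,
    ⟨univ, univ_mem⟩, u.empty_notMem, u.mem_or_compl_mem⟩

lemma IsUltra.exists_ultrafilter (hp : IsUltra p) : ∃ u : Ultrafilter ℕ+, {A | A ∈ u} = p :=
  ⟨Ultrafilter.ofComplNotMemIff (hp.1.toFilter hp.2.1) fun S =>
    ⟨(hp.2.2.2 S).resolve_right, fun hS => hp.1.compl_notMem hp.2.2.1 hS⟩, rfl⟩

lemma famSum_ultrafilter (u v : Ultrafilter ℕ+) :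
    famSum {A | A ∈ u} {A | A ∈ v} = {A | A ∈ u + v} := by
  ext A
  change (∀ᶠ n in (u : Filter ℕ+), ∀ᶠ m in (v : Filter ℕ+), m + n ∈ A) ↔
    ∀ᶠ n in (u : Filter ℕ+), ∀ᶠ m in (v : Filter ℕ+), n + m ∈ A
  simp only [add_comm]

lemma isUltra_famSum (hp : IsUltra p) (hq : IsUltra q) : IsUltra (famSum p q) := by
  obtain ⟨u, rfl⟩ := hp.exists_ultrafilter
  obtain ⟨v, rfl⟩ := hq.exists_ultrafilter
  rw [famSum_ultrafilter]
  exact isUltra_ultrafilter (u + v)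

lemma IsUltra.properFamily (hp : IsUltra p) : ProperFamily p := ⟨hp.2.1, hp.2.2.1⟩

lemma IsUltra.eq_of_subset (hp : IsUltra p) (hq : IsFilterFamily q) (hq₀ : ∅ ∉ q)
    (hpq : p ⊆ q) : q = p :=
  (Subset.antisymm · hpq) fun A hA =>
    (hp.2.2.2 A).resolve_right fun hAc => hq.compl_notMem hq₀ hA (hpq hAc)

lemma IsUltra.famSum_self_eq_iff (hp : IsUltra p) : famSum p p = p ↔ p ⊆ famSum p p :=
  ⟨Eq.superset, fun h => hp.eq_of_subset (isUltra_famSum hp hp).1 (isUltra_famSum hp hp).2.2.1 h⟩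

lemma exists_idempotent_isUltra_superset (hG : IsFilterFamily G) (hGP : ProperFamily G)
    (hGI : IdempotentFamily G) : ∃ p, IsUltra p ∧ famSum p p = p ∧ G ⊆ p := by
  let S : Set (Ultrafilter ℕ+) := ⋂ A ∈ G, {u | A ∈ u}
  have mem_S {u : Ultrafilter ℕ+} : u ∈ S ↔ G ⊆ {A | A ∈ u} := mem_iInter₂
  have hS_closed : IsClosed S := isClosed_biInter fun A _ => ultrafilter_isClosed_basic A
  have hS_nonempty : S.Nonempty := by
    have : (hG.toFilter hGP.1).NeBot := ⟨fun h => hGP.2 (empty_mem_iff_bot.2 h)⟩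
    obtain ⟨u, hu⟩ := Ultrafilter.exists_le (hG.toFilter hGP.1)
    exact ⟨u, mem_S.2 fun A hA => hu hA⟩
  have hS_add : ∀ u ∈ S, ∀ v ∈ S, u + v ∈ S := fun u hu v hv => mem_S.2 <|
    famSum_ultrafilter u v ▸ hGI.trans (famSum_mono (isUltra_ultrafilter u).1.1 (mem_S.1 hu)
      (mem_S.1 hv))
  obtain ⟨u, hu, huu⟩ := exists_idempotent_in_compact_add_subsemigroup
    Ultrafilter.continuous_add_left S hS_nonempty hS_closed.isCompact hS_add
  exact ⟨_, isUltra_ultrafilter u, by rw [famSum_ultrafilter, huu], mem_S.1 hu⟩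

/-- **Theorem (maximal idempotent filters are idempotent ultrafilters).**
For a family `𝔉` the following are equivalent:
(1) `𝔉` is a proper, idempotent filter that is maximal among proper, idempotent filters;
(2) `𝔉` is an ultrafilter with `𝔉 ⊆ 𝔉 + 𝔉`;
(3) `𝔉` is an ultrafilter with `𝔉 = 𝔉 + 𝔉`.
In particular, every proper, idempotent filter is contained in an idempotent ultrafilter. -/
theorem maximal_idempotent_filter_iff_idempotent_ultrafilter (𝓕 : Set (Set ℕ+)) :
    ((IsFilterFamily 𝓕 ∧ ProperFamily 𝓕 ∧ IdempotentFamily 𝓕 ∧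
        ∀ 𝓖 : Set (Set ℕ+), IsFilterFamily 𝓖 → ProperFamily 𝓖 → IdempotentFamily 𝓖 →
          𝓕 ⊆ 𝓖 → 𝓖 = 𝓕) ↔
      (IsUltra 𝓕 ∧ 𝓕 ⊆ famSum 𝓕 𝓕)) ∧
    ((IsUltra 𝓕 ∧ 𝓕 ⊆ famSum 𝓕 𝓕) ↔ (IsUltra 𝓕 ∧ famSum 𝓕 𝓕 = 𝓕)) ∧
    (∀ 𝓖 : Set (Set ℕ+), IsFilterFamily 𝓖 → ProperFamily 𝓖 → IdempotentFamily 𝓖 →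
      ∃ p : Set (Set ℕ+), IsUltra p ∧ famSum p p = p ∧ 𝓖 ⊆ p) := by
  refine ⟨⟨?_, ?_⟩, ⟨fun ⟨hU, hI⟩ => ⟨hU, hU.famSum_self_eq_iff.2 hI⟩,
    fun ⟨hU, hI⟩ => ⟨hU, hI.superset⟩⟩, fun _ => exists_idempotent_isUltra_superset⟩
  · rintro ⟨hF, hP, hI, hmax⟩
    obtain ⟨p, hp, hpp, hsub⟩ := exists_idempotent_isUltra_superset hF hP hI
    obtain rfl := hmax p hp.1 hp.properFamily hpp.superset hsub
    exact ⟨hp, hpp.superset⟩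
  · rintro ⟨hU, hI⟩
    exact ⟨hU.1, hU.properFamily, hI, fun 𝓖 hG hGP _ hsub => hU.eq_of_subset hG hGP.2 hsub⟩
end
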